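/- arXiv:0910.4088 — 5 statements merged into one kernel-verified Lean document; each statement's English description precedes it below -/
import Mathlib

section
/- Let {η_t} be an irreducible positive recurrent continuous-time Markov chain on a countable set E, reversible with respect to its invariant probability μ, with holding rates λ ∈ L¹(μ). Let F = A ∪ B be a disjoint union and let r_F(A,B) = μ(A)⁻¹ Σ_{η∈A} λ(η)μ(η) P_η[T_B⁺ < T_{F∖B}⁺] be the mean jump rate of the trace process on F from A to B. Then μ(A) r_F(A,B) = Cap(A,B). -/
/-!
Let `g η` be the probability that the jump chain started at `η` visits `B` before `A`, and
`h = 1 - g`. Conditioning on the first jump shows that `h` is harmonic off `A ∪ B`, equals `1`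
on `A` and `0` on `B`, and that `λ(η) μ(η) P_η[T_B⁺ < T_A⁺] = ∑_ξ μ(η) R(η,ξ) (h η - h ξ)` for
`η ∈ A`, so `μ(A) r_F(A,B)` is the net flow of `h` out of `A`. By reversibility, summation by
parts turns that flow into the Dirichlet form of `h`, and shows that `h` minimises the Dirichlet
form among bounded functions with its boundary values. Truncating a test function to `[0, 1]`
does not increase its Dirichlet form, so the infimum defining the capacity is attained at `h`.
-/

open MeasureTheory
open scoped ENNReal

noncomputable def retT {E : Type*} (A : Set E) (ω : ℕ → E) : ℕ∞ :=
  ⨅ (n : ℕ) (_ : 0 < n ∧ ω n ∈ A), (n : ℕ∞)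

section Paths

variable {E : Type*} {S T : Set E} {ω : ℕ → E}

def hitsBefore (S T : Set E) (ω : ℕ → E) : Prop :=
  ∃ n, ω n ∈ S ∧ ∀ m ≤ n, ω m ∉ T

theorem iInf_natCast_lt_iInf_natCast_iff {P Q : ℕ → Prop} :
    (⨅ (n : ℕ) (_ : P n), (n : ℕ∞)) < ⨅ (n : ℕ) (_ : Q n), (n : ℕ∞) ↔
      ∃ n, P n ∧ ∀ m ≤ n, ¬ Q m := by
  simp only [iInf_lt_iff]
  constructor
  · rintro ⟨n, hP, hlt⟩
    exact ⟨n, hP, fun m hmn hQ => (hlt.trans_le (iInf₂_le m hQ)).not_ge (by exact_mod_cast hmn)⟩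
  · rintro ⟨n, hP, hQ⟩
    refine ⟨n, hP, (ENat.natCast_lt_natCast.2 n.lt_succ_self).trans_le (le_iInf₂ fun m hm => ?_)⟩
    exact_mod_cast Nat.succ_le_of_lt (not_le.1 fun hmn => hQ m hmn hm)

theorem retT_lt_retT_iff :
    retT S ω < retT T ω ↔ hitsBefore S T (fun n => ω (n + 1)) := by
  rw [retT, retT, iInf_natCast_lt_iInf_natCast_iff]
  constructor
  · rintro ⟨_ | n, ⟨hn, hS⟩, hT⟩
    · exact absurd hn (lt_irrefl 0)
    · exact ⟨n, hS, fun m hm hmT => hT (m + 1) (by omega) ⟨m.succ_pos, hmT⟩⟩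
  · rintro ⟨n, hS, hT⟩
    refine ⟨n + 1, ⟨n.succ_pos, hS⟩, fun m hm ⟨hm0, hmT⟩ => ?_⟩
    obtain ⟨k, rfl⟩ := Nat.exists_eq_succ_of_ne_zero hm0.ne'
    exact hT k (by omega) hmT

theorem hitsBefore_of_mem_of_notMem (hS : ω 0 ∈ S) (hT : ω 0 ∉ T) : hitsBefore S T ω :=
  ⟨0, hS, fun m hm => by rwa [Nat.le_zero.1 hm]⟩

theorem not_hitsBefore_of_mem (hT : ω 0 ∈ T) : ¬ hitsBefore S T ω :=
  fun ⟨_, _, h⟩ => h 0 (Nat.zero_le _) hT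

theorem hitsBefore_shift_iff (hS : ω 0 ∉ S) (hT : ω 0 ∉ T) :
    hitsBefore S T (fun n => ω (n + 1)) ↔ hitsBefore S T ω := by
  constructor
  · rintro ⟨n, hnS, hnT⟩
    refine ⟨n + 1, hnS, fun m hm => ?_⟩
    rcases m with _ | m
    exacts [hT, hnT m (by omega)]
  · rintro ⟨_ | n, hnS, hnT⟩
    · exact absurd hnS hS
    · exact ⟨n, hnS, fun m hm => hnT (m + 1) (by omega)⟩

theorem measurableSet_hitsBefore [MeasurableSpace E] [Countable E] [MeasurableSingletonClass E] :
    MeasurableSet {ω : ℕ → E | hitsBefore S T ω} := by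
  have hcoord : ∀ (n : ℕ) (U : Set E), MeasurableSet {ω : ℕ → E | ω n ∈ U} :=
    fun n U => measurable_pi_apply n U.to_countable.measurableSet
  simp only [hitsBefore, Set.ofPred_exists, Set.ofPred_and, Set.ofPred_forall]
  exact .iUnion fun n => (hcoord n S).inter
    (.iInter fun m => .iInter fun _ => (hcoord m Tᶜ))

end Paths

theorem summable_mul_of_abs_le {ι : Type*} {f w : ι → ℝ} (hf : Summable f) {K : ℝ}
    (hw : ∀ i, |w i| ≤ K) : Summable fun i => f i * w i :=
  Summable.of_norm_bounded (hf.abs.mul_right K) fun i => by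
    rw [Real.norm_eq_abs, abs_mul]
    exact mul_le_mul_of_nonneg_left (hw i) (abs_nonneg _)

theorem abs_sub_le_two_mul {x y K : ℝ} (hx : |x| ≤ K) (hy : |y| ≤ K) : |x - y| ≤ 2 * K :=
  (abs_sub x y).trans (by linarith)

theorem abs_mul_le_of_abs_le {x y Kx Ky : ℝ} (hx : |x| ≤ Kx) (hy : |y| ≤ Ky) :
    |x * y| ≤ Kx * Ky := by
  rw [abs_mul]
  exact mul_le_mul hx hy (abs_nonneg y) ((abs_nonneg x).trans hx)

theorem ENNReal.half_mul_ofReal_two_mul (x : ℝ) :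
    (1 / 2 : ℝ≥0∞) * ENNReal.ofReal (2 * x) = ENNReal.ofReal x := by
  rw [ENNReal.ofReal_mul zero_le_two, ENNReal.ofReal_ofNat, ← mul_assoc, one_div,
    ENNReal.inv_mul_cancel two_ne_zero ENNReal.ofNat_ne_top, one_mul]

section Dirichlet

variable {E : Type*} {c : E → E → ℝ}

noncomputable def netFlow (c : E → E → ℝ) (v : E → ℝ) (a : E) : ℝ :=
  ∑' b, c a b * (v a - v b)

/-- Twice the Dirichlet form `D(v) = ½ ∑ c(a,b) (v b - v a)²` of the conductances `c`. -/
noncomputable def energy (c : E → E → ℝ) (v : E → ℝ) : ℝ :=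
  ∑' q : E × E, c q.1 q.2 * (v q.2 - v q.1) ^ 2

theorem summable_energy (hcs : Summable fun q : E × E => c q.1 q.2) {v : E → ℝ} {K : ℝ}
    (hv : ∀ a, |v a| ≤ K) :
    Summable fun q : E × E => c q.1 q.2 * (v q.2 - v q.1) ^ 2 :=
  summable_mul_of_abs_le hcs (K := 2 * K * (2 * K)) fun q => by
    rw [sq]
    have h := abs_sub_le_two_mul (hv q.2) (hv q.1)
    exact abs_mul_le_of_abs_le h h

theorem energy_nonneg (hc0 : ∀ a b, 0 ≤ c a b) (v : E → ℝ) : 0 ≤ energy c v :=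
  tsum_nonneg fun _ => mul_nonneg (hc0 _ _) (sq_nonneg _)

theorem tsum_tsum_ofReal_eq_ofReal_energy (hc0 : ∀ a b, 0 ≤ c a b)
    (hcs : Summable fun q : E × E => c q.1 q.2) {v : E → ℝ} {K : ℝ} (hv : ∀ a, |v a| ≤ K) :
    ∑' (a) (b), ENNReal.ofReal (c a b * (v b - v a) ^ 2) = ENNReal.ofReal (energy c v) := by
  rw [energy, ENNReal.ofReal_tsum_of_nonneg (fun q => mul_nonneg (hc0 _ _) (sq_nonneg _))
    (summable_energy hcs hv)]
  exact ENNReal.tsum_prod.symm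

/-- Green's identity; by symmetry of `c` the sums over `(a, b)` and over `(b, a)` coincide. -/
theorem tsum_mul_sub_mul_sub_eq (hsym : ∀ a b, c a b = c b a)
    (hcs : Summable fun q : E × E => c q.1 q.2) {v d : E → ℝ} {Kv Kd : ℝ} (hv : ∀ a, |v a| ≤ Kv)
    (hd : ∀ a, |d a| ≤ Kd) :
    ∑' q : E × E, c q.1 q.2 * ((v q.2 - v q.1) * (d q.2 - d q.1)) =
      2 * ∑' a, d a * netFlow c v a := by
  have hbound : ∀ q : E × E, |(v q.1 - v q.2) * d q.1| ≤ 2 * Kv * Kd :=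
    fun q => abs_mul_le_of_abs_le (abs_sub_le_two_mul (hv _) (hv _)) (hd _)
  set F : E × E → ℝ := fun q => c q.1 q.2 * ((v q.1 - v q.2) * d q.1)
  have hF : Summable F := summable_mul_of_abs_le hcs hbound
  have hswap : ∑' q : E × E, c q.1 q.2 * ((v q.2 - v q.1) * d q.2) = ∑' q, F q := by
    rw [← (Equiv.prodComm E E).tsum_eq F]
    exact tsum_congr fun q => by simp [F, hsym q.1 q.2]
  have hF' : Summable fun q : E × E => c q.1 q.2 * ((v q.2 - v q.1) * d q.2) :=
    summable_mul_of_abs_le hcs fun q => by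
      simpa [abs_sub_comm] using hbound q.swap
  calc ∑' q : E × E, c q.1 q.2 * ((v q.2 - v q.1) * (d q.2 - d q.1))
      = ∑' q : E × E, c q.1 q.2 * ((v q.2 - v q.1) * d q.2) + ∑' q, F q := by
        rw [← hF'.tsum_add hF]
        exact tsum_congr fun q => by ring
    _ = 2 * ∑' a, d a * netFlow c v a := by
        rw [hswap, hF.tsum_prod, ← two_mul]
        congr 2 with a
        rw [netFlow, ← tsum_mul_left]
        exact tsum_congr fun b => by ring

theorem energy_eq_two_mul_tsum_indicator_netFlow (hsym : ∀ a b, c a b = c b a)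
    (hcs : Summable fun q : E × E => c q.1 q.2) {A B : Set E} {v : E → ℝ} {K : ℝ}
    (hv : ∀ a, |v a| ≤ K) (hA : ∀ a ∈ A, v a = 1) (hB : ∀ a ∈ B, v a = 0)
    (hharm : ∀ a, a ∉ A → a ∉ B → netFlow c v a = 0) :
    energy c v = 2 * ∑' a, A.indicator (netFlow c v) a := by
  calc energy c v = ∑' q : E × E, c q.1 q.2 * ((v q.2 - v q.1) * (v q.2 - v q.1)) :=
        tsum_congr fun q => by ring
    _ = 2 * ∑' a, v a * netFlow c v a := tsum_mul_sub_mul_sub_eq hsym hcs hv hv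
    _ = 2 * ∑' a, A.indicator (netFlow c v) a := by
        congr 2 with a
        by_cases haA : a ∈ A
        · rw [Set.indicator_of_mem haA, hA a haA, one_mul]
        rw [Set.indicator_of_notMem haA]
        by_cases haB : a ∈ B
        · rw [hB a haB, zero_mul]
        · rw [hharm a haA haB, mul_zero]

theorem energy_le_of_harmonic (hsym : ∀ a b, c a b = c b a) (hc0 : ∀ a b, 0 ≤ c a b)
    (hcs : Summable fun q : E × E => c q.1 q.2) {A B : Set E} {v w : E → ℝ} {K : ℝ}
    (hv : ∀ a, |v a| ≤ K) (hw : ∀ a, |w a| ≤ K) (hvA : ∀ a ∈ A, v a = 1) (hvB : ∀ a ∈ B, v a = 0)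
    (hwA : ∀ a ∈ A, w a = 1) (hwB : ∀ a ∈ B, w a = 0)
    (hharm : ∀ a, a ∉ A → a ∉ B → netFlow c v a = 0) :
    energy c v ≤ energy c w := by
  set d : E → ℝ := fun a => w a - v a
  have hd : ∀ a, |d a| ≤ 2 * K := fun a => abs_sub_le_two_mul (hw a) (hv a)
  have hcross : ∀ a, d a * netFlow c v a = 0 := by
    intro a
    by_cases haA : a ∈ A
    · simp [d, hwA a haA, hvA a haA]
    by_cases haB : a ∈ B
    · simp [d, hwB a haB, hvB a haB]
    · rw [hharm a haA haB, mul_zero]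
  have hsplit : energy c w = energy c v + energy c d +
      2 * ∑' q : E × E, c q.1 q.2 * ((v q.2 - v q.1) * (d q.2 - d q.1)) := by
    have hcross' := summable_mul_of_abs_le hcs
      fun q => abs_mul_le_of_abs_le (abs_sub_le_two_mul (hv q.2) (hv q.1))
        (abs_sub_le_two_mul (hd q.2) (hd q.1))
    have hv' := summable_energy hcs hv
    have hd' := summable_energy hcs hd
    rw [energy, energy, energy, ← tsum_mul_left, ← hv'.tsum_add hd',
      ← (hv'.add hd').tsum_add (hcross'.mul_left 2)]
    exact tsum_congr fun q => by ring
  rw [hsplit, tsum_mul_sub_mul_sub_eq hsym hcs hv hd, tsum_congr hcross, tsum_zero]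
  linarith [energy_nonneg hc0 d]

theorem iInf_half_energy_eq_tsum_indicator_netFlow (hsym : ∀ a b, c a b = c b a)
    (hc0 : ∀ a b, 0 ≤ c a b) (hcs : Summable fun q : E × E => c q.1 q.2) {μ : E → ℝ}
    (hμ : Summable μ) {A B : Set E} {h : E → ℝ} (hh : ∀ a, |h a| ≤ 1)
    (hA : ∀ a ∈ A, h a = 1) (hB : ∀ a ∈ B, h a = 0)
    (hharm : ∀ a, a ∉ A → a ∉ B → netFlow c h a = 0) :
    ⨅ (u : E → ℝ) (_ : Summable fun η => μ η * u η ^ 2)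
        (_ : ∀ η ∈ A, u η = 1) (_ : ∀ η ∈ B, u η = 0),
        (1 / 2 : ℝ≥0∞) * ∑' (η) (ξ), ENNReal.ofReal (c η ξ * (u ξ - u η) ^ 2)
      = ENNReal.ofReal (∑' a, A.indicator (netFlow c h) a) := by
  have hmin : (1 / 2 : ℝ≥0∞) * ENNReal.ofReal (energy c h) =
      ENNReal.ofReal (∑' a, A.indicator (netFlow c h) a) := by
    rw [energy_eq_two_mul_tsum_indicator_netFlow hsym hcs hh hA hB hharm,
      ENNReal.half_mul_ofReal_two_mul]
  have hsummable : Summable fun η => μ η * h η ^ 2 :=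
    summable_mul_of_abs_le hμ fun η => by rw [sq]; exact abs_mul_le_of_abs_le (hh η) (hh η)
  refine le_antisymm (iInf_le_of_le h <| iInf_le_of_le hsummable <| iInf_le_of_le hA <|
    iInf_le_of_le hB <| by rw [tsum_tsum_ofReal_eq_ofReal_energy hc0 hcs hh, hmin]) ?_
  simp only [le_iInf_iff]
  intro u _ huA huB
  -- truncating `u` to `[0, 1]` keeps the boundary values and does not increase the energy
  set w : E → ℝ := fun a => Set.projIcc 0 1 zero_le_one (u a)
  have hw : ∀ a, |w a| ≤ 1 := fun a =>
    abs_le.2 ⟨by linarith [(Set.projIcc 0 1 zero_le_one (u a)).2.1],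
      (Set.projIcc 0 1 zero_le_one (u a)).2.2⟩
  have hwA : ∀ a ∈ A, w a = 1 := fun a ha => by simp [w, huA a ha]
  have hwB : ∀ a ∈ B, w a = 0 := fun a ha => by simp [w, huB a ha]
  calc ENNReal.ofReal (∑' a, A.indicator (netFlow c h) a)
      = (1 / 2 : ℝ≥0∞) * ENNReal.ofReal (energy c h) := hmin.symm
    _ ≤ (1 / 2 : ℝ≥0∞) * ENNReal.ofReal (energy c w) := by
        gcongr
        exact energy_le_of_harmonic hsym hc0 hcs hh hw hA hB hwA hwB hharm
    _ = (1 / 2 : ℝ≥0∞) * ∑' (η) (ξ), ENNReal.ofReal (c η ξ * (w ξ - w η) ^ 2) := by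
        rw [tsum_tsum_ofReal_eq_ofReal_energy hc0 hcs hw]
    _ ≤ (1 / 2 : ℝ≥0∞) * ∑' (η) (ξ), ENNReal.ofReal (c η ξ * (u ξ - u η) ^ 2) := by
        gcongr _ * ∑' (η) (ξ), ENNReal.ofReal ?_ with η ξ
        exact mul_le_mul_of_nonneg_left (sq_le_sq.2 (Set.abs_projIcc_sub_projIcc _)) (hc0 η ξ)

end Dirichlet

section JumpChain

variable {E : Type*} [MeasurableSpace E] {ℙ : E → Measure (ℕ → E)} {S T : Set E} {η : E}

noncomputable def hitProb (ℙ : E → Measure (ℕ → E)) (S T : Set E) (η : E) : ℝ :=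
  (ℙ η).real {ω | hitsBefore S T ω}

theorem measureReal_shift_preimage_eq_tsum [Countable E] [MeasurableSingletonClass E]
    [∀ η, IsFiniteMeasure (ℙ η)] {p : E → E → ℝ} (hp0 : ∀ η ξ, 0 ≤ p η ξ)
    (hMarkov : ∀ (η ξ : E) (C : Set (ℕ → E)), MeasurableSet C →
      ℙ η {ω | ω 1 = ξ ∧ (fun n => ω (n + 1)) ∈ C} = ENNReal.ofReal (p η ξ) * ℙ ξ C)
    (η : E) {C : Set (ℕ → E)} (hC : MeasurableSet C) :
    (ℙ η).real {ω | (fun n => ω (n + 1)) ∈ C} = ∑' ξ, p η ξ * (ℙ ξ).real C := by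
  set F : E → Set (ℕ → E) := fun ξ => {ω | ω 1 = ξ ∧ (fun n => ω (n + 1)) ∈ C}
  have hunion : {ω : ℕ → E | (fun n => ω (n + 1)) ∈ C} = ⋃ ξ, F ξ := by
    ext ω
    simp [F]
  have hshift : Measurable fun (ω : ℕ → E) n => ω (n + 1) := by fun_prop
  have hmeas : ∀ ξ, MeasurableSet (F ξ) :=
    fun ξ => ((measurableSet_singleton ξ).preimage (measurable_pi_apply 1)).inter
      (hC.preimage hshift)
  have hdisj : Pairwise (Function.onFun Disjoint F) :=
    fun ξ ξ' hne => Set.disjoint_left.2 fun ω h h' => hne (h.1.symm.trans h'.1)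
  rw [measureReal_def, hunion, measure_iUnion hdisj hmeas, tsum_congr fun ξ => hMarkov η ξ C hC,
    ENNReal.tsum_toReal_eq fun ξ => ENNReal.mul_ne_top ENNReal.ofReal_ne_top (measure_ne_top _ _)]
  exact tsum_congr fun ξ => by rw [ENNReal.toReal_mul, ENNReal.toReal_ofReal (hp0 η ξ),
    measureReal_def]

theorem hitProb_eq_zero (hstart : ∀ η, ∀ᵐ ω ∂ℙ η, ω 0 = η) (hη : η ∈ T) :
    hitProb ℙ S T η = 0 := by
  have hsub : {ω | hitsBefore S T ω} ⊆ {ω | ¬ ω 0 = η} :=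
    fun ω hω h0 => not_hitsBefore_of_mem (by rwa [h0]) hω
  rw [hitProb, measureReal_def, measure_mono_null hsub (ae_iff.1 (hstart η)), ENNReal.toReal_zero]

theorem hitProb_eq_one [Countable E] [MeasurableSingletonClass E]
    [∀ η, IsProbabilityMeasure (ℙ η)] (hstart : ∀ η, ∀ᵐ ω ∂ℙ η, ω 0 = η) (hS : η ∈ S)
    (hT : η ∉ T) : hitProb ℙ S T η = 1 := by
  rw [hitProb, measureReal_def, (ae_iff_measure_eq measurableSet_hitsBefore.nullMeasurableSet).1,
    measure_univ, ENNReal.toReal_one]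
  filter_upwards [hstart η] with ω h0
  exact hitsBefore_of_mem_of_notMem (by rwa [h0]) (by rwa [h0])

theorem hitProb_eq_tsum [Countable E] [MeasurableSingletonClass E] [∀ η, IsFiniteMeasure (ℙ η)]
    {p : E → E → ℝ} (hp0 : ∀ η ξ, 0 ≤ p η ξ)
    (hMarkov : ∀ (η ξ : E) (C : Set (ℕ → E)), MeasurableSet C →
      ℙ η {ω | ω 1 = ξ ∧ (fun n => ω (n + 1)) ∈ C} = ENNReal.ofReal (p η ξ) * ℙ ξ C)
    (hstart : ∀ η, ∀ᵐ ω ∂ℙ η, ω 0 = η) (hS : η ∉ S) (hT : η ∉ T) :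
    hitProb ℙ S T η = ∑' ξ, p η ξ * hitProb ℙ S T ξ := by
  have hshift : {ω | hitsBefore S T ω} =ᵐ[ℙ η] {ω | hitsBefore S T (fun n => ω (n + 1))} := by
    refine Filter.eventuallyEq_set.2 ?_
    filter_upwards [hstart η] with ω h0
    exact (hitsBefore_shift_iff (by rwa [h0]) (by rwa [h0])).symm
  rw [hitProb, measureReal_congr hshift]
  exact measureReal_shift_preimage_eq_tsum hp0 hMarkov η measurableSet_hitsBefore

theorem measureReal_retT_lt_retT [Countable E] [MeasurableSingletonClass E]
    [∀ η, IsFiniteMeasure (ℙ η)] {p : E → E → ℝ} (hp0 : ∀ η ξ, 0 ≤ p η ξ)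
    (hMarkov : ∀ (η ξ : E) (C : Set (ℕ → E)), MeasurableSet C →
      ℙ η {ω | ω 1 = ξ ∧ (fun n => ω (n + 1)) ∈ C} = ENNReal.ofReal (p η ξ) * ℙ ξ C) (η : E) :
    (ℙ η).real {ω | retT S ω < retT T ω} = ∑' ξ, p η ξ * hitProb ℙ S T ξ := by
  simp_rw [retT_lt_retT_iff]
  exact measureReal_shift_preimage_eq_tsum hp0 hMarkov η measurableSet_hitsBefore

end JumpChain

theorem netFlow_one_sub_eq {E : Type*} {R : E → E → ℝ} {lam μ g : E → ℝ}
    (hRsum : ∀ η, Summable (R η)) (hlam : ∀ η, lam η = ∑' ξ, R η ξ) (hlampos : ∀ η, 0 < lam η)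
    (hg : ∀ η, |g η| ≤ 1) (η : E) :
    netFlow (fun η ξ => μ η * R η ξ) (fun ξ => 1 - g ξ) η =
      μ η * lam η * (∑' ξ, R η ξ / lam η * g ξ - g η) := by
  have hRg : Summable fun ξ => R η ξ * g ξ := summable_mul_of_abs_le (hRsum η) hg
  calc netFlow (fun η ξ => μ η * R η ξ) (fun ξ => 1 - g ξ) η
      = ∑' ξ, (μ η * (R η ξ * g ξ) - μ η * g η * R η ξ) := tsum_congr fun ξ => by ring
    _ = μ η * ∑' ξ, R η ξ * g ξ - μ η * g η * lam η := by
        rw [(hRg.mul_left _).tsum_sub ((hRsum η).mul_left _), tsum_mul_left, tsum_mul_left, hlam]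
    _ = μ η * lam η * (∑' ξ, R η ξ / lam η * g ξ - g η) := by
        simp_rw [div_mul_eq_mul_div, tsum_div_const]
        field_simp [(hlampos η).ne']

theorem summable_prod_mul_of_summable {E : Type*} {R : E → E → ℝ} {lam μ : E → ℝ}
    (hc0 : ∀ η ξ, 0 ≤ μ η * R η ξ) (hRsum : ∀ η, Summable (R η)) (hlam : ∀ η, lam η = ∑' ξ, R η ξ)
    (hMfin : Summable fun η => lam η * μ η) :
    Summable fun q : E × E => μ q.1 * R q.1 q.2 :=
  (summable_prod_of_nonneg fun q => hc0 q.1 q.2).2 ⟨fun η => (hRsum η).mul_left (μ η),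
    hMfin.congr fun η => by dsimp only; rw [tsum_mul_left, ← hlam, mul_comm]⟩

theorem tsum_indicator_mul_inv_mul {E : Type*} {f : E → ℝ} (hf : Summable f)
    (hpos : ∀ a, 0 < f a) (A : Set E) (g : E → ℝ) :
    (∑' a, A.indicator f a) * ((∑' a, A.indicator f a)⁻¹ * ∑' a, A.indicator g a) =
      ∑' a, A.indicator g a := by
  rcases A.eq_empty_or_nonempty with rfl | ⟨a, ha⟩
  · simp
  refine mul_inv_cancel_left₀ (ne_of_gt ?_) _
  calc 0 < f a := hpos a
    _ = A.indicator f a := (Set.indicator_of_mem ha f).symm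
    _ ≤ ∑' b, A.indicator f b := (hf.indicator A).le_tsum a fun b _ =>
        Set.indicator_nonneg (fun b _ => (hpos b).le) b

theorem stmt5_general {E : Type*} [Countable E] [MeasurableSpace E] [MeasurableSingletonClass E]
    (R : E → E → ℝ) (lam μ : E → ℝ) (ℙ : E → Measure (ℕ → E)) (A B : Set E) (rF : ℝ)
    (hAB : Disjoint A B)
    (hR_nonneg : ∀ η ξ, 0 ≤ R η ξ)
    (hRsum : ∀ η, Summable (R η))
    (hlam : ∀ η, lam η = ∑' ξ, R η ξ)
    (hlampos : ∀ η, 0 < lam η)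
    (hμpos : ∀ η, 0 < μ η)
    (hμsummable : Summable μ)
    (hrev : ∀ η ξ, μ η * R η ξ = μ ξ * R ξ η)
    (hMfin : Summable fun η => lam η * μ η)
    (hprob : ∀ η, IsProbabilityMeasure (ℙ η))
    (hstart : ∀ η, ℙ η {ω | ω 0 = η} = 1)
    (hMarkov : ∀ (η ξ : E) (C : Set (ℕ → E)), MeasurableSet C →
      ℙ η {ω | ω 1 = ξ ∧ (fun n => ω (n + 1)) ∈ C}
        = ENNReal.ofReal (R η ξ / lam η) * ℙ ξ C)
    (hrF : rF = (∑' η, Set.indicator A μ η)⁻¹ *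
      ∑' η, Set.indicator A
        (fun η => lam η * μ η *
          (ℙ η {ω | retT B ω < retT ((A ∪ B) \ B) ω}).toReal) η) :
    ENNReal.ofReal ((∑' η, Set.indicator A μ η) * rF)
      = ⨅ (u : E → ℝ) (_ : Summable fun η => μ η * u η ^ 2)
          (_ : ∀ η ∈ A, u η = 1) (_ : ∀ η ∈ B, u η = 0),
          (1 / 2 : ℝ≥0∞) * ∑' (η) (ξ), ENNReal.ofReal (μ η * R η ξ * (u ξ - u η) ^ 2) := by
  have := hprob
  have hstart' : ∀ η, ∀ᵐ ω ∂ℙ η, ω 0 = η :=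
    fun η => (ae_iff_prob_eq_one (by fun_prop)).2 (hstart η)
  have hp0 : ∀ η ξ, 0 ≤ R η ξ / lam η := fun η ξ => div_nonneg (hR_nonneg η ξ) (hlampos η).le
  have hc0 : ∀ η ξ, 0 ≤ μ η * R η ξ := fun η ξ => mul_nonneg (hμpos η).le (hR_nonneg η ξ)
  have hcs := summable_prod_mul_of_summable hc0 hRsum hlam hMfin
  set g := hitProb ℙ B A
  have hg : ∀ η, g η ∈ Set.Icc 0 1 := fun η => ⟨measureReal_nonneg, measureReal_le_one⟩
  have hgA : ∀ η ∈ A, g η = 0 := fun η hη => hitProb_eq_zero hstart' hη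
  have hgB : ∀ η ∈ B, g η = 1 := fun η hη => hitProb_eq_one hstart' hη (hAB.notMem_of_mem_right hη)
  have hflow := netFlow_one_sub_eq (μ := μ) hRsum hlam hlampos
    fun η => abs_le.2 ⟨by linarith [(hg η).1], (hg η).2⟩
  have hrate : ∀ η ∈ A, lam η * μ η * (ℙ η {ω | retT B ω < retT ((A ∪ B) \ B) ω}).toReal =
      netFlow (fun η ξ => μ η * R η ξ) (fun ξ => 1 - g ξ) η := fun η hη => by
    rw [Set.union_sdiff_cancel_right (Set.disjoint_iff.1 hAB), ← measureReal_def,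
      measureReal_retT_lt_retT hp0 hMarkov, hflow, hgA η hη]
    ring
  rw [hrF, tsum_indicator_mul_inv_mul hμsummable hμpos, Set.indicator_congr hrate]
  refine (iInf_half_energy_eq_tsum_indicator_netFlow hrev hc0 hcs hμsummable
    (fun η => abs_le.2 ⟨by linarith [(hg η).2], by linarith [(hg η).1]⟩) ?_ ?_ ?_).symm
  · intro η hη
    rw [hgA η hη, sub_zero]
  · intro η hη
    rw [hgB η hη, sub_self]
  · intro η hηA hηB
    rw [hflow, ← hitProb_eq_tsum hp0 hMarkov hstart' hηB hηA, sub_self, mul_zero]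

/-- For an irreducible positive recurrent continuous-time Markov chain with rates `R`,
reversible with respect to its invariant probability `μ`, with holding rates
`lam ∈ L¹(μ)`, and for a disjoint union `F = A ∪ B`, the mean jump rate
`r_F(A,B) = μ(A)⁻¹ ∑_{η∈A} lam(η) μ(η) P_η[T_B⁺ < T_{F∖B}⁺]` of the trace process on `F`
satisfies `μ(A) r_F(A,B) = Cap(A,B)`, where `Cap` is the Dirichlet variational capacity.
Here `ℙ` is the family of laws of the associated jump chain, with jump probabilities
`p(η,ξ) = R(η,ξ)/lam(η)`. -/
theorem stmt5 {E : Type*} [Countable E] [MeasurableSpace E] [MeasurableSingletonClass E]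
    (R : E → E → ℝ) (lam μ : E → ℝ) (ℙ : E → Measure (ℕ → E)) (A B : Set E) (rF : ℝ)
    (hAB : Disjoint A B)
    (hRdiag : ∀ η, R η η = 0)
    (hR_nonneg : ∀ η ξ, 0 ≤ R η ξ)
    (hRsum : ∀ η, Summable (R η))
    (hlam : ∀ η, lam η = ∑' ξ, R η ξ)
    (hlampos : ∀ η, 0 < lam η)
    (hμpos : ∀ η, 0 < μ η)
    (hμprob : ∑' η, μ η = 1)
    (hμsummable : Summable μ)
    (hrev : ∀ η ξ, μ η * R η ξ = μ ξ * R ξ η)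
    (hMfin : Summable fun η => lam η * μ η)
    (hprob : ∀ η, IsProbabilityMeasure (ℙ η))
    (hstart : ∀ η, ℙ η {ω | ω 0 = η} = 1)
    (hMarkov : ∀ (η ξ : E) (C : Set (ℕ → E)), MeasurableSet C →
      ℙ η {ω | ω 1 = ξ ∧ (fun n => ω (n + 1)) ∈ C}
        = ENNReal.ofReal (R η ξ / lam η) * ℙ ξ C)
    (hrec : ∀ η ξ, ℙ η {ω | ∃ n, 0 < n ∧ ω n = ξ} = 1)
    (hrF : rF = (∑' η, Set.indicator A μ η)⁻¹ *
      ∑' η, Set.indicator A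
        (fun η => lam η * μ η *
          (ℙ η {ω | retT B ω < retT ((A ∪ B) \ B) ω}).toReal) η) :
    ENNReal.ofReal ((∑' η, Set.indicator A μ η) * rF)
      = ⨅ (u : E → ℝ) (_ : Summable fun η => μ η * u η ^ 2)
          (_ : ∀ η ∈ A, u η = 1) (_ : ∀ η ∈ B, u η = 0),
          (1 / 2 : ℝ≥0∞) * ∑' (η) (ξ), ENNReal.ofReal (μ η * R η ξ * (u ξ - u η) ^ 2) :=
  stmt5_general R lam μ ℙ A B rF hAB hR_nonneg hRsum hlam hlampos hμpos hμsummable hrev hMfin hprob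
    hstart hMarkov hrF
end

section
/- Let A, B be disjoint subsets of F ⊆ E, for a positive recurrent reversible Markov chain as above. Then the mean set rate satisfies μ(A) r_F(A,B) = (1/2){ Cap(A, F∖A) + Cap(B, F∖B) − Cap(A∪B, F∖(A∪B)) }. -/
open MeasureTheory
open scoped ENNReal

/-- The capacity `Cap(X,Y) = ∑_{η∈X} lam(η) μ(η) P_η[T_Y⁺ < T_X⁺]`, computed from the jump
chain `ℙ` of a positive recurrent reversible continuous-time chain. -/
noncomputable def capSum {E : Type*} [MeasurableSpace E]
    (lam μ : E → ℝ) (ℙ : E → Measure (ℕ → E)) (X Y : Set E) : ℝ :=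
  ∑' η, Set.indicator X
    (fun η => lam η * μ η * (ℙ η {ω | retT Y ω < retT X ω}).toReal) η

/-!
Write `Φ(X, C) = ∑_{η ∈ X} M(η) ℙ_η[the first return to F lies in C]`. If `X`, `Y` partition `F`,
then `{T_X⁺ < T_Y⁺}` is exactly this event for `C = X`, so `Cap(X, F∖X) = Φ(X, F∖X)` and
`μ(A) r_F(A, B) = Φ(A, B)`. `Φ` is additive in both arguments, and it is symmetric: decomposing
by the time `n + 1` of the first return, `M(η) ℙ_η[T_F⁺ = n + 1, ω (n + 1) = ξ]` is symmetric in
`(η, ξ)`, by induction on `n` from detailed balance `M(η) p(η, ξ) = M(ξ) p(ξ, η)`. Splitting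
`F∖A = B ∪ F∖(A∪B)` and `F∖B = A ∪ F∖(A∪B)` then gives
`Φ(A, F∖A) + Φ(B, F∖B) = 2 Φ(A, B) + Φ(A∪B, F∖(A∪B))`.
-/

section

open Set Function

variable {E : Type*}

theorem sdiff_eq_union_sdiff_union {F A B : Set E} (hB : B ⊆ F) (hAB : Disjoint A B) :
    F \ A = B ∪ F \ (A ∪ B) := by
  ext x
  have := @hB x
  have := hAB.notMem_of_mem_right (a := x)
  simp only [mem_sdiff, mem_union]
  tauto

def firstReturnInAt (F C : Set E) (n : ℕ) : Set (ℕ → E) :=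
  {ω | ω (n + 1) ∈ C ∧ ∀ m, 0 < m → m ≤ n → ω m ∉ F}

def firstReturnIn (F C : Set E) : Set (ℕ → E) :=
  ⋃ n, firstReturnInAt F C n

theorem natCast_lt_retT_iff (Y : Set E) (ω : ℕ → E) (n : ℕ) :
    (n : ℕ∞) < retT Y ω ↔ ∀ m, 0 < m → m ≤ n → ω m ∉ Y := by
  constructor
  · intro h m hm hmn hY
    have : retT Y ω ≤ m := iInf₂_le m ⟨hm, hY⟩
    exact absurd (Nat.cast_lt.mp (h.trans_le this)) (by omega)
  · intro h
    calc (n : ℕ∞) < (n + 1 : ℕ) := by exact_mod_cast n.lt_succ_self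
      _ ≤ retT Y ω := le_iInf₂ fun m ⟨hm, hY⟩ => by
          by_contra! hlt
          have : m < n + 1 := by exact_mod_cast hlt
          exact h m hm (by omega) hY

theorem retT_lt_retT_iff_s6 (X Y : Set E) (ω : ℕ → E) :
    retT X ω < retT Y ω ↔ ∃ n, 0 < n ∧ ω n ∈ X ∧ ∀ m, 0 < m → m ≤ n → ω m ∉ Y := by
  simp only [retT, iInf_lt_iff, ← natCast_lt_retT_iff, exists_prop, and_assoc]

theorem setOf_retT_lt_retT_eq_firstReturnIn {F X Y : Set E} (hXY : Disjoint X Y)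
    (hF : X ∪ Y = F) : {ω | retT X ω < retT Y ω} = firstReturnIn F X := by
  subst hF
  ext ω
  simp only [mem_ofPred_eq, retT_lt_retT_iff_s6, firstReturnIn, firstReturnInAt, mem_iUnion]
  constructor
  · rintro ⟨n, hn, hX, hY⟩
    classical
    have hhit : ∃ k, 0 < k ∧ ω k ∈ X ∪ Y := ⟨n, hn, Or.inl hX⟩
    obtain ⟨hk, hkF⟩ := Nat.find_spec hhit
    have hkn : Nat.find hhit ≤ n := Nat.find_min' hhit ⟨hn, Or.inl hX⟩
    refine ⟨Nat.find hhit - 1, ?_, fun m hm hmk hmF => ?_⟩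
    · rw [Nat.sub_add_cancel hk]
      exact hkF.resolve_right (hY _ hk hkn)
    · exact Nat.find_min hhit (by omega) ⟨hm, hmF⟩
  · rintro ⟨n, hX, hF'⟩
    refine ⟨n + 1, n.succ_pos, hX, fun m hm hmn hY => ?_⟩
    rcases hmn.lt_or_eq with hlt | rfl
    · exact hF' m hm (by omega) (Or.inr hY)
    · exact hXY.notMem_of_mem_left hX hY

theorem eq_of_mem_firstReturnInAt {F C₁ C₂ : Set E} (hC₁ : C₁ ⊆ F) (hC₂ : C₂ ⊆ F)
    {ω : ℕ → E} {n k : ℕ} (h₁ : ω ∈ firstReturnInAt F C₁ n) (h₂ : ω ∈ firstReturnInAt F C₂ k) :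
    n = k := by
  by_contra hne
  rcases Nat.lt_or_gt_of_ne hne with h | h
  · exact h₂.2 (n + 1) n.succ_pos h (hC₁ h₁.1)
  · exact h₁.2 (k + 1) k.succ_pos h (hC₂ h₂.1)

theorem pairwise_disjoint_firstReturnInAt {F C : Set E} (hC : C ⊆ F) :
    Pairwise (Disjoint on firstReturnInAt F C) := fun _ _ hne =>
  disjoint_left.2 fun _ h₁ h₂ => hne (eq_of_mem_firstReturnInAt hC hC h₁ h₂)

theorem disjoint_firstReturnIn {F C₁ C₂ : Set E} (hC₁ : C₁ ⊆ F) (hC₂ : C₂ ⊆ F)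
    (h : Disjoint C₁ C₂) : Disjoint (firstReturnIn F C₁) (firstReturnIn F C₂) := by
  simp only [firstReturnIn, disjoint_iUnion_left, disjoint_iUnion_right]
  intro k n
  refine disjoint_left.2 fun ω h₁ h₂ => ?_
  obtain rfl := eq_of_mem_firstReturnInAt hC₁ hC₂ h₁ h₂
  exact h.notMem_of_mem_left h₁.1 h₂.1

theorem firstReturnIn_union (F C₁ C₂ : Set E) :
    firstReturnIn F (C₁ ∪ C₂) = firstReturnIn F C₁ ∪ firstReturnIn F C₂ := by
  simp only [firstReturnIn, ← iUnion_union_distrib]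
  congr! 1 with n
  ext ω
  simp only [firstReturnInAt, mem_ofPred_eq, mem_union, or_and_right]

theorem firstReturnInAt_eq_biUnion (F C : Set E) (n : ℕ) :
    firstReturnInAt F C n = ⋃ ξ ∈ C, firstReturnInAt F {ξ} n := by
  ext ω
  simp [firstReturnInAt]

theorem firstReturnInAt_succ (F C : Set E) (n : ℕ) :
    firstReturnInAt F C (n + 1) =
      ⋃ ζ ∈ Fᶜ, {ω | ω 1 = ζ ∧ (fun k => ω (k + 1)) ∈ firstReturnInAt F C n} := by
  ext ω
  simp only [firstReturnInAt, mem_iUnion, mem_ofPred_eq, mem_compl_iff, exists_prop]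
  constructor
  · rintro ⟨hC, hF⟩
    exact ⟨ω 1, hF 1 one_pos (by omega), rfl, hC,
      fun m hm hmn => hF (m + 1) m.succ_pos (by omega)⟩
  · rintro ⟨_, h1, rfl, hC, hF⟩
    refine ⟨hC, fun m hm hmn => ?_⟩
    obtain ⟨k, rfl⟩ := Nat.exists_eq_add_of_lt hm
    rcases k.eq_zero_or_pos with rfl | hk
    · exact h1
    · simpa using hF k hk (by omega)

section TabooKernel

variable {G : Set E} {P : E → E → ℝ≥0∞} {D : ℕ → E → E → ℝ≥0∞}

-- The first-step recursion makes `D n = (P 1_G)ⁿ P`, so `D` also obeys the last-step recursion.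
theorem taboo_succ_eq_tsum_right (h0 : ∀ η ξ, D 0 η ξ = P η ξ)
    (hsucc : ∀ n η ξ, D (n + 1) η ξ = ∑' ζ : G, P η ζ * D n ζ ξ) (n : ℕ) (η ξ : E) :
    D (n + 1) η ξ = ∑' ζ : G, D n η ζ * P ζ ξ := by
  induction n generalizing η ξ with
  | zero => simp only [hsucc, h0]
  | succ n ih =>
    calc D (n + 2) η ξ = ∑' ζ : G, ∑' ζ' : G, P η ζ * D n ζ ζ' * P ζ' ξ := by
          rw [hsucc (n + 1)]
          refine tsum_congr fun ζ => ?_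
          rw [ih, ← ENNReal.tsum_mul_left]
          simp only [mul_assoc]
      _ = ∑' ζ' : G, D (n + 1) η ζ' * P ζ' ξ := by
          rw [ENNReal.tsum_comm]
          refine tsum_congr fun ζ' => ?_
          rw [hsucc n, ← ENNReal.tsum_mul_right]

theorem weighted_taboo_symm {w : E → ℝ≥0∞} (hw : ∀ η ξ, w η * P η ξ = w ξ * P ξ η)
    (h0 : ∀ η ξ, D 0 η ξ = P η ξ)
    (hsucc : ∀ n η ξ, D (n + 1) η ξ = ∑' ζ : G, P η ζ * D n ζ ξ) (n : ℕ) (η ξ : E) :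
    w η * D n η ξ = w ξ * D n ξ η := by
  induction n generalizing η ξ with
  | zero => simp only [h0, hw]
  | succ n ih =>
    calc w η * D (n + 1) η ξ = ∑' ζ : G, w η * D n η ζ * P ζ ξ := by
          simp only [taboo_succ_eq_tsum_right h0 hsucc, ← ENNReal.tsum_mul_left, mul_assoc]
      _ = ∑' ζ : G, w ξ * (P ξ ζ * D n ζ η) := tsum_congr fun ζ => by
          rw [ih, mul_right_comm, hw]; ring
      _ = w ξ * D (n + 1) ξ η := by rw [hsucc, ENNReal.tsum_mul_left]

end TabooKernel

section PathMeasure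

variable [MeasurableSpace E]

def MarkovAtFirstStep (ℙ : E → Measure (ℕ → E)) (P : E → E → ℝ≥0∞) : Prop :=
  ∀ η ξ (S : Set (ℕ → E)), MeasurableSet S →
    ℙ η {ω | ω 1 = ξ ∧ (fun n => ω (n + 1)) ∈ S} = P η ξ * ℙ ξ S

variable {ℙ : E → Measure (ℕ → E)} {P : E → E → ℝ≥0∞}

theorem measure_firstReturnInAt_zero [∀ η, IsProbabilityMeasure (ℙ η)]
    (hMarkov : MarkovAtFirstStep ℙ P)
    (F : Set E) (η ξ : E) : ℙ η (firstReturnInAt F {ξ} 0) = P η ξ := by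
  have : firstReturnInAt F {ξ} 0 = {ω | ω 1 = ξ ∧ (fun n => ω (n + 1)) ∈ univ} := by
    ext ω
    simp only [firstReturnInAt, mem_singleton_iff, mem_univ, and_true, mem_ofPred_eq]
    exact and_iff_left fun m hm hm0 => absurd hm (by omega)
  rw [this, hMarkov _ _ _ .univ, measure_univ, mul_one]

variable [Countable E] [MeasurableSingletonClass E]

theorem measurableSet_firstReturnInAt (F C : Set E) (n : ℕ) :
    MeasurableSet (firstReturnInAt F C n) := by
  unfold firstReturnInAt
  measurability

theorem measurableSet_firstReturnIn (F C : Set E) : MeasurableSet (firstReturnIn F C) :=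
  .iUnion fun n => measurableSet_firstReturnInAt F C n

theorem measure_firstReturnInAt_eq_tsum (F C : Set E) (n : ℕ) (η : E) :
    ℙ η (firstReturnInAt F C n) = ∑' ξ : C, ℙ η (firstReturnInAt F {(ξ : E)} n) := by
  rw [firstReturnInAt_eq_biUnion, measure_biUnion C.to_countable _
    fun ξ _ => measurableSet_firstReturnInAt F {ξ} n]
  exact fun ξ _ ξ' _ hne => disjoint_left.2 fun ω h h' => hne (h.1.symm.trans h'.1)

theorem measure_firstReturnInAt_succ
    (hMarkov : MarkovAtFirstStep ℙ P)
    (F C : Set E) (n : ℕ) (η : E) :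
    ℙ η (firstReturnInAt F C (n + 1)) = ∑' ζ : ↥Fᶜ, P η ζ * ℙ ζ (firstReturnInAt F C n) := by
  have hshift : Measurable fun (ω : ℕ → E) (k : ℕ) => ω (k + 1) :=
    measurable_pi_lambda _ fun k => measurable_pi_apply (k + 1)
  rw [firstReturnInAt_succ, measure_biUnion Fᶜ.to_countable]
  · simp only [hMarkov _ _ _ (measurableSet_firstReturnInAt F C n)]
  · exact fun ζ _ ζ' _ hne => disjoint_left.2 fun ω h h' => hne (h.1.symm.trans h'.1)
  · exact fun ζ _ => (measurableSet_eq_fun (measurable_pi_apply 1) measurable_const).inter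
      (hshift (measurableSet_firstReturnInAt F C n))

end PathMeasure

section Flux

variable [MeasurableSpace E]

/-- `Φ(X, C)`, with weights `w = M`. -/
noncomputable def flux (w : E → ℝ≥0∞) (ℙ : E → Measure (ℕ → E)) (F X C : Set E) : ℝ≥0∞ :=
  ∑' η : X, w η * ℙ η (firstReturnIn F C)

variable {w : E → ℝ≥0∞} {ℙ : E → Measure (ℕ → E)}

theorem flux_union_left {F X₁ X₂ : Set E} (h : Disjoint X₁ X₂) (C : Set E) :
    flux w ℙ F (X₁ ∪ X₂) C = flux w ℙ F X₁ C + flux w ℙ F X₂ C :=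
  ENNReal.summable.tsum_union_disjoint (f := fun η => w η * ℙ η (firstReturnIn F C)) h
    ENNReal.summable

theorem flux_ne_top [∀ η, IsProbabilityMeasure (ℙ η)] (hw : ∑' η, w η ≠ ∞) (F X C : Set E) :
    flux w ℙ F X C ≠ ∞ :=
  ne_top_of_le_ne_top hw <| calc
    flux w ℙ F X C ≤ ∑' η : X, w η :=
      ENNReal.tsum_le_tsum fun _ => mul_le_of_le_one_right' prob_le_one
    _ ≤ ∑' η, w η := ENNReal.tsum_comp_le_tsum_of_injective Subtype.val_injective w

variable [Countable E] [MeasurableSingletonClass E]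

theorem flux_union_right {F C₁ C₂ : Set E} (hC₁ : C₁ ⊆ F) (hC₂ : C₂ ⊆ F) (h : Disjoint C₁ C₂)
    (X : Set E) : flux w ℙ F X (C₁ ∪ C₂) = flux w ℙ F X C₁ + flux w ℙ F X C₂ := by
  simp only [flux, firstReturnIn_union, measure_union (disjoint_firstReturnIn hC₁ hC₂ h)
    (measurableSet_firstReturnIn F C₂), mul_add, ENNReal.tsum_add]

theorem flux_eq_tsum {F C : Set E} (hC : C ⊆ F) (X : Set E) :
    flux w ℙ F X C = ∑' n, ∑' η : X, ∑' ξ : C, w η * ℙ η (firstReturnInAt F {(ξ : E)} n) := by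
  rw [flux, ENNReal.tsum_comm]
  refine tsum_congr fun η => ?_
  rw [firstReturnIn, measure_iUnion (pairwise_disjoint_firstReturnInAt hC)
    (measurableSet_firstReturnInAt F C), ← ENNReal.tsum_mul_left]
  refine tsum_congr fun n => ?_
  rw [measure_firstReturnInAt_eq_tsum, ENNReal.tsum_mul_left]

theorem flux_comm [∀ η, IsProbabilityMeasure (ℙ η)] {P : E → E → ℝ≥0∞}
    (hMarkov : MarkovAtFirstStep ℙ P)
    (hw : ∀ η ξ, w η * P η ξ = w ξ * P ξ η) {F X C : Set E} (hX : X ⊆ F) (hC : C ⊆ F) :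
    flux w ℙ F X C = flux w ℙ F C X := by
  rw [flux_eq_tsum hC, flux_eq_tsum hX]
  refine tsum_congr fun n => ?_
  rw [ENNReal.tsum_comm]
  refine tsum_congr fun ξ => tsum_congr fun η => ?_
  exact weighted_taboo_symm (D := fun n η ξ => ℙ η (firstReturnInAt F {ξ} n)) hw
    (measure_firstReturnInAt_zero hMarkov F)
    (fun n η ξ => measure_firstReturnInAt_succ hMarkov F {ξ} n η) n η ξ

theorem two_mul_flux_add_flux_union [∀ η, IsProbabilityMeasure (ℙ η)] {P : E → E → ℝ≥0∞}
    (hMarkov : MarkovAtFirstStep ℙ P)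
    (hw : ∀ η ξ, w η * P η ξ = w ξ * P ξ η) {F A B : Set E} (hA : A ⊆ F) (hB : B ⊆ F)
    (hAB : Disjoint A B) :
    2 * flux w ℙ F A B + flux w ℙ F (A ∪ B) (F \ (A ∪ B))
      = flux w ℙ F A (F \ A) + flux w ℙ F B (F \ B) := by
  have hS : ∀ {X}, X ⊆ A ∪ B → Disjoint X (F \ (A ∪ B)) := disjoint_sdiff_right.mono_left
  have hB' : F \ B = A ∪ F \ (A ∪ B) := by
    rw [union_comm A B]
    exact sdiff_eq_union_sdiff_union hA hAB.symm
  rw [sdiff_eq_union_sdiff_union hB hAB, hB', flux_union_right hB sdiff_subset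
    (hS subset_union_right), flux_union_right hA sdiff_subset (hS subset_union_left),
    flux_union_left hAB, flux_comm hMarkov hw hB hA]
  ring

end Flux

theorem tsum_indicator_mul_toReal {a : E → ℝ} (ha : ∀ η, 0 ≤ a η) {p : E → ℝ≥0∞}
    (hp : ∀ η, p η ≠ ∞) (X : Set E) :
    ∑' η, X.indicator (fun η => a η * (p η).toReal) η
      = (∑' η : X, ENNReal.ofReal (a η) * p η).toReal := by
  rw [ENNReal.tsum_toReal_eq (f := fun η : X => ENNReal.ofReal (a η) * p η)
      fun η => ENNReal.mul_ne_top ENNReal.ofReal_ne_top (hp η),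
    tsum_subtype X fun η => (ENNReal.ofReal (a η) * p η).toReal]
  simp only [ENNReal.toReal_mul, ENNReal.toReal_ofReal (ha _)]

theorem tsum_indicator_mul_inv_mul_cancel {μ : E → ℝ} (hμ : Summable μ) (hpos : ∀ η, 0 < μ η)
    {X : Set E} {x : ℝ} (hx : X = ∅ → x = 0) :
    (∑' η, X.indicator μ η) * ((∑' η, X.indicator μ η)⁻¹ * x) = x := by
  rcases X.eq_empty_or_nonempty with rfl | ⟨a, ha⟩
  · simp [hx rfl]
  · refine mul_inv_cancel_left₀ ((hμ.indicator X).tsum_pos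
      (fun η => indicator_nonneg (fun η _ => (hpos η).le) η) a ?_).ne' _
    simpa [ha] using hpos a

theorem ofReal_mul_ofReal_div_comm {R : E → E → ℝ} {lam μ : E → ℝ} (hlam : ∀ η, 0 < lam η)
    (hμ : ∀ η, 0 ≤ μ η) (hrev : ∀ η ξ, μ η * R η ξ = μ ξ * R ξ η) (η ξ : E) :
    ENNReal.ofReal (lam η * μ η) * ENNReal.ofReal (R η ξ / lam η)
      = ENNReal.ofReal (lam ξ * μ ξ) * ENNReal.ofReal (R ξ η / lam ξ) := by
  rw [← ENNReal.ofReal_mul (mul_nonneg (hlam η).le (hμ η)),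
    ← ENNReal.ofReal_mul (mul_nonneg (hlam ξ).le (hμ ξ))]
  congr 1
  field_simp [(hlam η).ne', (hlam ξ).ne']
  linarith [hrev η ξ]

theorem capSum_sdiff_eq_toReal_flux [MeasurableSpace E] {lam μ : E → ℝ}
    (hM : ∀ η, 0 ≤ lam η * μ η) {ℙ : E → Measure (ℕ → E)} [∀ η, IsFiniteMeasure (ℙ η)]
    {F X : Set E} (hX : X ⊆ F) :
    capSum lam μ ℙ X (F \ X)
      = (flux (fun η => ENNReal.ofReal (lam η * μ η)) ℙ F X (F \ X)).toReal := by
  rw [capSum, setOf_retT_lt_retT_eq_firstReturnIn disjoint_sdiff_left (sdiff_union_of_subset hX),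
    tsum_indicator_mul_toReal hM fun η => measure_ne_top _ _]
  rfl

end

theorem stmt6_general {E : Type*} [Countable E] [MeasurableSpace E] [MeasurableSingletonClass E]
    (R : E → E → ℝ) (lam μ : E → ℝ) (ℙ : E → Measure (ℕ → E)) (F A B : Set E) (rF : ℝ)
    (hAF : A ⊆ F) (hBF : B ⊆ F) (hAB : Disjoint A B)
    (hlampos : ∀ η, 0 < lam η)
    (hμpos : ∀ η, 0 < μ η)
    (hμsummable : Summable μ)
    (hrev : ∀ η ξ, μ η * R η ξ = μ ξ * R ξ η)
    (hMfin : Summable fun η => lam η * μ η)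
    (hprob : ∀ η, IsProbabilityMeasure (ℙ η))
    (hMarkov : ∀ (η ξ : E) (C : Set (ℕ → E)), MeasurableSet C →
      ℙ η {ω | ω 1 = ξ ∧ (fun n => ω (n + 1)) ∈ C}
        = ENNReal.ofReal (R η ξ / lam η) * ℙ ξ C)
    (hrF : rF = (∑' η, Set.indicator A μ η)⁻¹ *
      ∑' η, Set.indicator A
        (fun η => lam η * μ η * (ℙ η {ω | retT B ω < retT (F \ B) ω}).toReal) η) :
    (∑' η, Set.indicator A μ η) * rF
      = (1 / 2) * (capSum lam μ ℙ A (F \ A) + capSum lam μ ℙ B (F \ B)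
          - capSum lam μ ℙ (A ∪ B) (F \ (A ∪ B))) := by
  have hM : ∀ η, 0 ≤ lam η * μ η := fun η => (mul_pos (hlampos η) (hμpos η)).le
  set w : E → ℝ≥0∞ := fun η => ENNReal.ofReal (lam η * μ η)
  have hfin : ∀ X C, flux w ℙ F X C ≠ ∞ := flux_ne_top (by
    rw [← ENNReal.ofReal_tsum_of_nonneg hM hMfin]
    exact ENNReal.ofReal_ne_top) F
  have hrate : ∑' η, A.indicator
      (fun η => lam η * μ η * (ℙ η {ω | retT B ω < retT (F \ B) ω}).toReal) η
      = (flux w ℙ F A B).toReal := by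
    rw [setOf_retT_lt_retT_eq_firstReturnIn Set.disjoint_sdiff_right (Set.union_sdiff_cancel hBF),
      tsum_indicator_mul_toReal hM fun η => measure_ne_top _ _]
    rfl
  have hbil := congrArg ENNReal.toReal <| two_mul_flux_add_flux_union hMarkov
    (ofReal_mul_ofReal_div_comm hlampos (fun η => (hμpos η).le) hrev) hAF hBF hAB
  rw [ENNReal.toReal_add (ENNReal.mul_ne_top ENNReal.ofNat_ne_top (hfin _ _)) (hfin _ _),
    ENNReal.toReal_add (hfin _ _) (hfin _ _), ENNReal.toReal_mul] at hbil
  rw [hrF, hrate, tsum_indicator_mul_inv_mul_cancel hμsummable hμpos (by rintro rfl; simp [flux]),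
    capSum_sdiff_eq_toReal_flux hM hAF, capSum_sdiff_eq_toReal_flux hM hBF,
    capSum_sdiff_eq_toReal_flux hM (Set.union_subset hAF hBF)]
  norm_num at hbil
  linarith

/-- For disjoint subsets `A`, `B` of `F ⊆ E` of a positive recurrent reversible chain, the
mean set rate satisfies
`μ(A) r_F(A,B) = (1/2){Cap(A,F∖A) + Cap(B,F∖B) − Cap(A∪B, F∖(A∪B))}`. -/
theorem stmt6 {E : Type*} [Countable E] [MeasurableSpace E] [MeasurableSingletonClass E]
    (R : E → E → ℝ) (lam μ : E → ℝ) (ℙ : E → Measure (ℕ → E)) (F A B : Set E) (rF : ℝ)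
    (hAF : A ⊆ F) (hBF : B ⊆ F) (hAB : Disjoint A B)
    (hRdiag : ∀ η, R η η = 0)
    (hR_nonneg : ∀ η ξ, 0 ≤ R η ξ)
    (hRsum : ∀ η, Summable (R η))
    (hlam : ∀ η, lam η = ∑' ξ, R η ξ)
    (hlampos : ∀ η, 0 < lam η)
    (hμpos : ∀ η, 0 < μ η)
    (hμprob : ∑' η, μ η = 1)
    (hμsummable : Summable μ)
    (hrev : ∀ η ξ, μ η * R η ξ = μ ξ * R ξ η)
    (hMfin : Summable fun η => lam η * μ η)
    (hprob : ∀ η, IsProbabilityMeasure (ℙ η))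
    (hstart : ∀ η, ℙ η {ω | ω 0 = η} = 1)
    (hMarkov : ∀ (η ξ : E) (C : Set (ℕ → E)), MeasurableSet C →
      ℙ η {ω | ω 1 = ξ ∧ (fun n => ω (n + 1)) ∈ C}
        = ENNReal.ofReal (R η ξ / lam η) * ℙ ξ C)
    (hrec : ∀ η ξ, ℙ η {ω | ∃ n, 0 < n ∧ ω n = ξ} = 1)
    (hrF : rF = (∑' η, Set.indicator A μ η)⁻¹ *
      ∑' η, Set.indicator A
        (fun η => lam η * μ η * (ℙ η {ω | retT B ω < retT (F \ B) ω}).toReal) η) :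
    (∑' η, Set.indicator A μ η) * rF
      = (1 / 2) * (capSum lam μ ℙ A (F \ A) + capSum lam μ ℙ B (F \ B)
          - capSum lam μ ℙ (A ∪ B) (F \ (A ∪ B))) :=
  stmt6_general R lam μ ℙ F A B rF hAF hBF hAB hlampos hμpos hμsummable hrev hMfin hprob hMarkov hrF
end

section
/- Let h : E → ℝ₊ be a nonnegative μ-integrable function with nonempty support F, for a positive recurrent reversible Markov chain with invariant probability μ. Let Cap_h denote the capacity of the h-time-changed (trace) process. Then for any disjoint A, B ⊆ F: ⟨h⟩_μ · Cap_h(A,B) = Cap(A,B). -/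
open MeasureTheory
open scoped ENNReal

/-!
For `η ∈ A` and `B ⊆ F` disjoint from `A`, the event `T_B⁺ < T_A⁺` forces the first visit to
`F` to avoid `η`, since a visit to `η ∈ A` before `T_B⁺` would give `T_A⁺ ≤ T_B⁺`. So the
conditioning on `T_F⁺ = T_{F∖{η}}⁺` in the return probabilities of the trace process cancels
against the factor `P_η[T_F⁺ = T_{F∖{η}}⁺]` in `λ^h`, and what remains is
`⟨h⟩_μ · (hμ/⟨h⟩_μ) · (λ/h) = λμ` termwise.
-/

section ReturnTime

variable {E : Type*} {s t : Set E} {ω : ℕ → E}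

lemma retT_le_of_mem {n : ℕ} (hn : 0 < n) (hs : ω n ∈ s) : retT s ω ≤ n :=
  iInf₂_le n ⟨hn, hs⟩

lemma retT_anti (hst : s ⊆ t) (ω : ℕ → E) : retT t ω ≤ retT s ω :=
  le_iInf₂ fun _ hn => retT_le_of_mem hn.1 (hst hn.2)

lemma retT_union (s t : Set E) (ω : ℕ → E) : retT (s ∪ t) ω = min (retT s ω) (retT t ω) := by
  refine le_antisymm (le_min (retT_anti Set.subset_union_left ω)
    (retT_anti Set.subset_union_right ω)) ?_
  refine le_iInf₂ fun n ⟨hn, hst⟩ => ?_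
  rcases hst with hs | ht
  · exact min_le_left _ _ |>.trans (retT_le_of_mem hn hs)
  · exact min_le_right _ _ |>.trans (retT_le_of_mem hn ht)

lemma retT_diff_singleton_eq_of_lt {A B F : Set E} {η : E} (hη : η ∈ A) (hB : B ⊆ F \ {η})
    (hlt : retT B ω < retT A ω) : retT (F \ {η}) ω = retT F ω := by
  refine le_antisymm ?_ (retT_anti Set.sdiff_subset ω)
  have hηlt : retT (F \ {η}) ω < retT {η} ω :=
    (retT_anti hB ω).trans_lt (hlt.trans_le (retT_anti (Set.singleton_subset_iff.mpr hη) ω))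
  calc retT (F \ {η}) ω = retT (F \ {η} ∪ {η}) ω := by rw [retT_union, min_eq_left hηlt.le]
    _ ≤ retT F ω := retT_anti (Set.subset_sdiff_union F {η}) ω

lemma setOf_retT_lt_and_eq_diff_singleton {A B F : Set E} {η : E} (hη : η ∈ A)
    (hB : B ⊆ F \ {η}) :
    {ω | retT B ω < retT A ω ∧ retT F ω = retT (F \ {η}) ω} = {ω | retT B ω < retT A ω} :=
  Set.ext fun _ => and_iff_left_of_imp fun hlt => (retT_diff_singleton_eq_of_lt hη hB hlt).symm

end ReturnTime

theorem stmt7_general {E : Type*} [MeasurableSpace E]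
    (lam μ h : E → ℝ) (ℙ : E → Measure (ℕ → E))
    (F A B : Set E) (hbar capH cap : ℝ)
    (hAB : Disjoint A B) (hAF : A ⊆ F) (hBF : B ⊆ F)
    (hh_nonneg : ∀ η, 0 ≤ h η)
    (hsupp : F = {η | 0 < h η}) (hFne : F.Nonempty)
    (hhint : Summable fun η => h η * μ η)
    (hμpos : ∀ η, 0 < μ η)
    (hhbar : hbar = ∑' η, h η * μ η)
    (hcapH : capH = ∑' η, Set.indicator A
      (fun η => (h η * μ η / hbar) * (lam η / h η) *
        (ℙ η {ω | retT B ω < retT A ω ∧ retT F ω = retT (F \ {η}) ω}).toReal) η)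
    (hcap : cap = ∑' η, Set.indicator A
      (fun η => lam η * μ η * (ℙ η {ω | retT B ω < retT A ω}).toReal) η) :
    hbar * capH = cap := by
  subst hsupp
  obtain ⟨η₀, hη₀⟩ := hFne
  have hbar_pos : 0 < hbar := hhbar ▸ hhint.tsum_pos
    (fun η => mul_nonneg (hh_nonneg η) (hμpos η).le) η₀ (mul_pos hη₀ (hμpos η₀))
  rw [hcapH, hcap, ← tsum_mul_left]
  refine tsum_congr fun η => ?_
  by_cases hη : η ∈ A
  · have hB : B ⊆ {ξ | 0 < h ξ} \ {η} :=
      Set.subset_sdiff_singleton hBF (hAB.notMem_of_mem_left hη)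
    have hhη : 0 < h η := hAF hη
    simp only [Set.indicator_of_mem hη, setOf_retT_lt_and_eq_diff_singleton hη hB]
    field_simp
  · simp only [Set.indicator_of_notMem hη, mul_zero]

/-- Let `h : E → ℝ₊` be a nonnegative `μ`-integrable function with nonempty support `F`,
for a positive recurrent reversible chain with invariant probability `μ`.  The capacity
`Cap_h` of the `h`-time-changed (trace) process, namely
`Cap_h(A,B) = ∑_{η∈A} μ^h(η) λ^h(η) P_η^h[τ_B⁺ < τ_A⁺]`
with `μ^h = hμ/⟨h⟩_μ`, `λ^h(η) = (lam(η)/h(η)) P_η[T_F⁺ = T_{F∖{η}}⁺]` and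
`P_η^h[τ_B⁺ < τ_A⁺] = P_η[T_B⁺ < T_A⁺ | T_F⁺ = T_{F∖{η}}⁺]`, satisfies
`⟨h⟩_μ · Cap_h(A,B) = Cap(A,B)` for all disjoint `A, B ⊆ F`. -/
theorem stmt7 {E : Type*} [Countable E] [MeasurableSpace E] [MeasurableSingletonClass E]
    (R : E → E → ℝ) (lam μ h : E → ℝ) (ℙ : E → Measure (ℕ → E))
    (F A B : Set E) (hbar capH cap : ℝ)
    (hAB : Disjoint A B) (hAF : A ⊆ F) (hBF : B ⊆ F)
    (hh_nonneg : ∀ η, 0 ≤ h η)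
    (hsupp : F = {η | 0 < h η}) (hFne : F.Nonempty)
    (hhint : Summable fun η => h η * μ η)
    (hRdiag : ∀ η, R η η = 0)
    (hR_nonneg : ∀ η ξ, 0 ≤ R η ξ)
    (hRsum : ∀ η, Summable (R η))
    (hlam : ∀ η, lam η = ∑' ξ, R η ξ)
    (hlampos : ∀ η, 0 < lam η)
    (hμpos : ∀ η, 0 < μ η)
    (hμprob : ∑' η, μ η = 1)
    (hμsummable : Summable μ)
    (hrev : ∀ η ξ, μ η * R η ξ = μ ξ * R ξ η)
    (hMfin : Summable fun η => lam η * μ η)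
    (hprob : ∀ η, IsProbabilityMeasure (ℙ η))
    (hstart : ∀ η, ℙ η {ω | ω 0 = η} = 1)
    (hMarkov : ∀ (η ξ : E) (C : Set (ℕ → E)), MeasurableSet C →
      ℙ η {ω | ω 1 = ξ ∧ (fun n => ω (n + 1)) ∈ C}
        = ENNReal.ofReal (R η ξ / lam η) * ℙ ξ C)
    (hrec : ∀ η ξ, ℙ η {ω | ∃ n, 0 < n ∧ ω n = ξ} = 1)
    (hhbar : hbar = ∑' η, h η * μ η)
    (hcapH : capH = ∑' η, Set.indicator A
      (fun η => (h η * μ η / hbar) * (lam η / h η) *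
        (ℙ η {ω | retT B ω < retT A ω ∧ retT F ω = retT (F \ {η}) ω}).toReal) η)
    (hcap : cap = ∑' η, Set.indicator A
      (fun η => lam η * μ η * (ℙ η {ω | retT B ω < retT A ω}).toReal) η) :
    hbar * capH = cap :=
  stmt7_general lam μ h ℙ F A B hbar capH cap hAB hAF hBF hh_nonneg hsupp hFne hhint hμpos hhbar
    hcapH hcap
end

section
/- Let {η_t} be an irreducible recurrent continuous-time Markov chain on countable E, with invariant measure μ (given by the occupation-time formula), and let h ≥ 0 have support F. Then the measure μ_o^h(ξ) = h(ξ)μ(ξ), ξ ∈ F, is invariant for the h-trace process η_t^h; moreover, if μ is reversible for the original chain then μ_o^h is reversible for the trace process. -/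
/-!
Pass to the jump chain, with kernel `P = R / λ` and invariant measure `ν = μ λ`. For `η ≠ ξ` in `F`,
`h(η) μ(η) R^h(η, ξ) = ν(η) Π(η, ξ)`, where `Π(η, ·)` is the law of the first position in `F` after
time `0`; in kernel form `Π = ∑ₙ (P 1_{Fᶜ})ⁿ P`.

Reversibility: if `ν P` is symmetric then so is every palindromic product `ν P 1_{Fᶜ} P ⋯ P`, hence
`ν Π` is symmetric.

Invariance: iterating `ν = ν P` and splitting off the mass in `F` at each step gives
`ν = ∑_{m ≤ N} ν 1_F (P 1_{Fᶜ})^m P + ν 1_{Fᶜ} (P 1_{Fᶜ})^N P`. At `ξ ∈ F` the remainder is at most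
the one for `F = {ξ}`, which tends to `0` because the chain returns to `ξ`; so `ν 1_F Π = ν` on `F`.
Since `Π(ξ, F) = 1` by recurrence, subtracting the diagonal terms gives the balance equations.
-/

open MeasureTheory
open scoped ENNReal
open scoped Classical

open Filter Topology

namespace TraceChain

variable {E : Type*}

section Kernel

variable (P : E → E → ℝ≥0∞) (A : Set E)

/-- The `P`-weight of the paths from `a` that avoid `A` at times `1, …, n` and sit at `b` at
time `n + 1`, i.e. `((P 1_{Aᶜ})ⁿ P)(a, b)`. -/
noncomputable def entryKernel : ℕ → E → E → ℝ≥0∞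
  | 0, a, b => P a b
  | n + 1, a, b => ∑' ζ, if ζ ∈ A then 0 else P a ζ * entryKernel n ζ b

noncomputable def entryDist (a b : E) : ℝ≥0∞ := ∑' n, entryKernel P A n a b

variable {P A}

theorem entryKernel_succ' (n : ℕ) (a b : E) :
    entryKernel P A (n + 1) a b = ∑' ζ, if ζ ∈ A then 0 else entryKernel P A n a ζ * P ζ b := by
  induction n generalizing a b with
  | zero => simp only [entryKernel]
  | succ n ih =>
    calc entryKernel P A (n + 2) a b
        = ∑' ζ, ∑' θ, if ζ ∈ A then 0 else if θ ∈ A then 0 else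
            P a ζ * entryKernel P A n ζ θ * P θ b := by
          refine tsum_congr fun ζ => ?_
          rw [ih]
          split_ifs <;> simp [← ENNReal.tsum_mul_left, mul_ite, mul_assoc]
      _ = ∑' θ, if θ ∈ A then 0 else entryKernel P A (n + 1) a θ * P θ b := by
          rw [ENNReal.tsum_comm]
          refine tsum_congr fun θ => ?_
          rw [entryKernel]
          split_ifs <;> simp [← ENNReal.tsum_mul_right, ite_mul, *]

theorem entryKernel_anti {B : Set E} (hAB : A ⊆ B) (n : ℕ) (a b : E) :
    entryKernel P B n a b ≤ entryKernel P A n a b := by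
  induction n generalizing a b with
  | zero => rfl
  | succ n ih =>
    refine ENNReal.tsum_le_tsum fun ζ => ?_
    by_cases hζ : ζ ∈ B
    · simp [hζ]
    · simp only [hζ, mt (@hAB ζ) hζ, if_false]
      exact mul_le_mul_right (ih ζ b) _

theorem mul_entryKernel_comm {ν : E → ℝ≥0∞} (hrev : ∀ a b, ν a * P a b = ν b * P b a)
    (n : ℕ) (a b : E) : ν a * entryKernel P A n a b = ν b * entryKernel P A n b a := by
  induction n generalizing a b with
  | zero => exact hrev a b
  | succ n ih =>
    rw [entryKernel, entryKernel_succ', ← ENNReal.tsum_mul_left, ← ENNReal.tsum_mul_left]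
    refine tsum_congr fun ζ => ?_
    split_ifs
    · simp
    · rw [← mul_assoc, hrev, mul_assoc, mul_left_comm, ih, mul_left_comm, mul_comm (P ζ a)]

theorem mul_entryDist_comm {ν : E → ℝ≥0∞} (hrev : ∀ a b, ν a * P a b = ν b * P b a) (a b : E) :
    ν a * entryDist P A a b = ν b * entryDist P A b a := by
  simp only [entryDist, ← ENNReal.tsum_mul_left, mul_entryKernel_comm hrev]

theorem tsum_eq_tsum_ite_add_tsum_ite (f : E → ℝ≥0∞) :
    ∑' η, f η = (∑' η, if η ∈ A then f η else 0) + ∑' η, if η ∈ A then 0 else f η := by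
  rw [← ENNReal.tsum_add]
  exact tsum_congr fun η => by split_ifs <;> simp

variable {ν : E → ℝ≥0∞} (hinv : ∀ b, ∑' a, ν a * P a b = ν b)
include hinv

theorem tsum_mul_entryKernel_succ (n : ℕ) (b : E) :
    ∑' η, ν η * entryKernel P A (n + 1) η b
      = ∑' ζ, if ζ ∈ A then 0 else ν ζ * entryKernel P A n ζ b := by
  calc ∑' η, ν η * entryKernel P A (n + 1) η b
      = ∑' η, ∑' ζ, if ζ ∈ A then 0 else ν η * P η ζ * entryKernel P A n ζ b := by
        refine tsum_congr fun η => ?_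
        rw [entryKernel, ← ENNReal.tsum_mul_left]
        exact tsum_congr fun ζ => by split_ifs <;> simp [mul_assoc]
    _ = ∑' ζ, if ζ ∈ A then 0 else ν ζ * entryKernel P A n ζ b := by
        rw [ENNReal.tsum_comm]
        refine tsum_congr fun ζ => ?_
        split_ifs
        · simp
        · rw [ENNReal.tsum_mul_right, hinv]

theorem eq_sum_range_add_tsum_outside (b : E) (N : ℕ) :
    ν b = ∑ m ∈ Finset.range (N + 1), (∑' η, if η ∈ A then ν η * entryKernel P A m η b else 0)
      + ∑' η, if η ∈ A then 0 else ν η * entryKernel P A N η b := by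
  induction N with
  | zero =>
    rw [zero_add, Finset.sum_range_one, ← tsum_eq_tsum_ite_add_tsum_ite, ← hinv b]
    rfl
  | succ N ih =>
    rw [Finset.sum_range_succ, add_assoc, ← tsum_eq_tsum_ite_add_tsum_ite,
      tsum_mul_entryKernel_succ hinv, ih]

theorem tendsto_tsum_outside_singleton {ξ : E} (hνξ : ν ξ ≠ ⊤)
    (hret : entryDist P {ξ} ξ ξ = 1) :
    Tendsto (fun N => ∑' η, if η ∈ ({ξ} : Set E) then 0 else ν η * entryKernel P {ξ} N η ξ)
      atTop (𝓝 0) := by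
  set ret : ℕ → ℝ≥0∞ := fun N => ν ξ * ∑ m ∈ Finset.range (N + 1), entryKernel P {ξ} m ξ ξ
  have hsplit : ∀ N, ret N + (∑' η, if η ∈ ({ξ} : Set E) then 0 else
      ν η * entryKernel P {ξ} N η ξ) = ν ξ := fun N => by
    conv_rhs => rw [eq_sum_range_add_tsum_outside (A := {ξ}) hinv ξ N]
    simp only [ret, Finset.mul_sum, Set.mem_singleton_iff, tsum_ite_eq]
  have hret_tendsto : Tendsto ret atTop (𝓝 (ν ξ)) := by
    have := ENNReal.Tendsto.const_mul (a := ν ξ)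
      ((ENNReal.tendsto_nat_tsum fun m => entryKernel P {ξ} m ξ ξ).comp
        (tendsto_add_atTop_nat 1)) (Or.inr hνξ)
    rwa [← entryDist, hret, mul_one] at this
  have := ENNReal.Tendsto.sub tendsto_const_nhds hret_tendsto (Or.inl hνξ)
  rw [tsub_self] at this
  refine this.congr fun N => (ENNReal.eq_sub_of_add_eq ?_ ((add_comm _ _).trans (hsplit N))).symm
  exact ne_top_of_le_ne_top hνξ (hsplit N ▸ le_self_add)

theorem tsum_mul_entryDist {ξ : E} (hξ : ξ ∈ A) (hνξ : ν ξ ≠ ⊤)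
    (hret : entryDist P {ξ} ξ ξ = 1) :
    (∑' η, if η ∈ A then ν η * entryDist P A η ξ else 0) = ν ξ := by
  set inside : ℕ → ℝ≥0∞ := fun m => ∑' η, if η ∈ A then ν η * entryKernel P A m η ξ else 0
  have houtside : Tendsto (fun N => ∑' η, if η ∈ A then 0 else ν η * entryKernel P A N η ξ)
      atTop (𝓝 0) := by
    refine tendsto_of_tendsto_of_tendsto_of_le_of_le tendsto_const_nhds
      (tendsto_tsum_outside_singleton hinv hνξ hret) (fun _ => zero_le)
      fun N => ENNReal.tsum_le_tsum fun η => ?_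
    by_cases hη : η ∈ A
    · simp [hη]
    · simp only [hη, show η ∉ ({ξ} : Set E) from fun h => hη (h ▸ hξ), if_false]
      exact mul_le_mul_right (entryKernel_anti (Set.singleton_subset_iff.2 hξ) N η ξ) _
  have hinside : Tendsto (fun N => ∑ m ∈ Finset.range (N + 1), inside m) atTop
      (𝓝 (∑' m, inside m)) :=
    (ENNReal.tendsto_nat_tsum _).comp (tendsto_add_atTop_nat 1)
  have hlim : ∑' m, inside m + 0 = ν ξ :=
    tendsto_nhds_unique (hinside.add houtside)
      (tendsto_const_nhds.congr fun N => eq_sum_range_add_tsum_outside hinv ξ N)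
  rw [← hlim, add_zero, ENNReal.tsum_comm]
  refine tsum_congr fun η => ?_
  split_ifs <;> simp [entryDist, ENNReal.tsum_mul_left]

end Kernel

theorem global_balance {K : E → E → ℝ≥0∞} {ν : E → ℝ≥0∞} {A : Set E} {ξ : E} (hξ : ξ ∈ A)
    (hνξ : ν ξ ≠ ⊤) (hinv : (∑' η, if η ∈ A then ν η * K η ξ else 0) = ν ξ)
    (hstoch : (∑' η, if η ∈ A then K ξ η else 0) = 1) :
    (∑' η, if η ∈ A ∧ η ≠ ξ then ν η * K η ξ else 0)
      = ν ξ * ∑' η, if η ∈ A ∧ η ≠ ξ then K ξ η else 0 := by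
  have split_off_ξ : ∀ f : E → ℝ≥0∞, (∑' η, if η ∈ A then f η else 0)
      = f ξ + ∑' η, if η ∈ A ∧ η ≠ ξ then f η else 0 := fun f => by
    rw [ENNReal.tsum_eq_add_tsum_ite ξ, if_pos hξ]
    exact congrArg _ (tsum_congr fun η => by by_cases hη : η = ξ <;> simp [hη])
  rw [split_off_ξ] at hinv hstoch
  have hKξξ : K ξ ξ ≠ ⊤ := ne_top_of_le_ne_top ENNReal.one_ne_top (hstoch ▸ le_self_add)
  refine (ENNReal.add_right_inj (ENNReal.mul_ne_top hνξ hKξξ)).1 ?_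
  rw [hinv, ← mul_add, hstoch, mul_one]

theorem retT_eq_find {A : Set E} {ω : ℕ → E} (h : ∃ n, 0 < n ∧ ω n ∈ A) :
    retT A ω = Nat.find h :=
  le_antisymm (iInf₂_le (Nat.find h) (Nat.find_spec h))
    (le_iInf₂ fun _ hm => Nat.cast_le.2 (Nat.find_min' h hm))

theorem retT_eq_natCast_iff {A : Set E} {ω : ℕ → E} {n : ℕ} :
    retT A ω = n ↔ (0 < n ∧ ω n ∈ A) ∧ ∀ k < n, ¬(0 < k ∧ ω k ∈ A) := by
  by_cases h : ∃ n, 0 < n ∧ ω n ∈ A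
  · rw [retT_eq_find h, Nat.cast_inj, Nat.find_eq_iff]
  · rw [show retT A ω = ⊤ from iInf₂_eq_top.2 fun m hm => (h ⟨m, hm⟩).elim]
    exact ⟨fun e => (ENat.top_ne_natCast n e).elim, fun hr => (h ⟨n, hr.1⟩).elim⟩

def entryEvent (A : Set E) (n : ℕ) (b : E) : Set (ℕ → E) :=
  {ω | ω (n + 1) = b ∧ ∀ k, 0 < k → k ≤ n → ω k ∉ A}

theorem entryEvent_succ (A : Set E) (n : ℕ) (b : E) :
    entryEvent A (n + 1) b
      = {ω | (fun k => ω (k + 1)) ∈ if ω 1 ∈ A then ∅ else entryEvent A n b} := by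
  ext ω
  simp only [entryEvent, Set.mem_ofPred_eq]
  split_ifs with h1
  · exact iff_of_false (fun h => h.2 1 one_pos (by omega) h1) id
  · constructor
    · rintro ⟨hb, h⟩
      exact ⟨hb, fun k hk hkn => h (k + 1) (by omega) (by omega)⟩
    · rintro ⟨hb, h⟩
      refine ⟨hb, fun k hk hkn => ?_⟩
      obtain ⟨j, rfl⟩ := Nat.exists_eq_succ_of_ne_zero hk.ne'
      rcases j with _ | j
      · exact h1
      · exact h (j + 1) (by omega) (by omega)

theorem mem_entryEvent_iff {A : Set E} {n : ℕ} {b : E} {ω : ℕ → E} (hb : b ∈ A) :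
    ω ∈ entryEvent A n b ↔ retT A ω = ↑(n + 1) ∧ ω (n + 1) = b := by
  rw [retT_eq_natCast_iff]
  constructor
  · rintro ⟨rfl, h⟩
    exact ⟨⟨⟨n.succ_pos, hb⟩, fun k hk ⟨hk0, hkA⟩ => h k hk0 (by omega) hkA⟩, rfl⟩
  · rintro ⟨⟨-, h⟩, rfl⟩
    exact ⟨rfl, fun k hk0 hkn hkA => h k (by omega) ⟨hk0, hkA⟩⟩

theorem eq_of_mem_entryEvent {A : Set E} {n m : ℕ} {b c : E} {ω : ℕ → E} (hb : b ∈ A)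
    (hc : c ∈ A) (hωb : ω ∈ entryEvent A n b) (hωc : ω ∈ entryEvent A m c) : n = m ∧ b = c := by
  obtain ⟨hn, rfl⟩ := (mem_entryEvent_iff hb).1 hωb
  obtain ⟨hm, rfl⟩ := (mem_entryEvent_iff hc).1 hωc
  obtain rfl : n = m := by simpa using hn.symm.trans hm
  exact ⟨rfl, rfl⟩

theorem exists_mem_entryEvent {A : Set E} {ω : ℕ → E} (h : ∃ n, 0 < n ∧ ω n ∈ A) :
    ∃ m, ω (m + 1) ∈ A ∧ ω ∈ entryEvent A m (ω (m + 1)) := by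
  obtain ⟨m, hm⟩ := Nat.exists_eq_succ_of_ne_zero (Nat.find_spec h).1.ne'
  have hret : retT A ω = ↑(m + 1) := by rw [retT_eq_find h, hm]
  have hA : ω (m + 1) ∈ A := (retT_eq_natCast_iff.1 hret).1.2
  exact ⟨m, hA, (mem_entryEvent_iff hA).2 ⟨hret, rfl⟩⟩

section PathMeasure

variable [Countable E] [MeasurableSpace E] [MeasurableSingletonClass E]

theorem measurableSet_entryEvent (A : Set E) (n : ℕ) (b : E) :
    MeasurableSet (entryEvent A n b) := by
  unfold entryEvent
  measurability

variable (ℙ : E → Measure (ℕ → E)) {P : E → E → ℝ≥0∞}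
  (hM : ∀ (a b : E) (C : Set (ℕ → E)), MeasurableSet C →
    ℙ a {ω | ω 1 = b ∧ (fun n => ω (n + 1)) ∈ C} = P a b * ℙ b C)
include hM

theorem measure_shift_mem {C : E → Set (ℕ → E)} (hC : ∀ ζ, MeasurableSet (C ζ)) (a : E) :
    ℙ a {ω | (fun n => ω (n + 1)) ∈ C (ω 1)} = ∑' ζ, P a ζ * ℙ ζ (C ζ) := by
  have hunion : {ω : ℕ → E | (fun n => ω (n + 1)) ∈ C (ω 1)}
      = ⋃ ζ, {ω | ω 1 = ζ ∧ (fun n => ω (n + 1)) ∈ C ζ} := by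
    ext ω
    simp
  rw [hunion, measure_iUnion]
  · exact tsum_congr fun ζ => hM a ζ (C ζ) (hC ζ)
  · exact fun ζ ζ' hne => Set.disjoint_left.2 fun ω h h' => hne (h.1.symm.trans h'.1)
  · intro ζ
    exact ((measurableSet_singleton ζ).preimage (measurable_pi_apply 1)).inter
      ((hC ζ).preimage (by fun_prop))

variable (hprob : ∀ a, IsProbabilityMeasure (ℙ a))
include hprob

theorem measure_entryEvent (A : Set E) (n : ℕ) (a b : E) :
    ℙ a (entryEvent A n b) = entryKernel P A n a b := by
  induction n generalizing a with
  | zero =>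
    have := hprob b
    have h0 : entryEvent A 0 b = {ω | ω 1 = b ∧ (fun n => ω (n + 1)) ∈ Set.univ} := by
      ext ω
      simp only [entryEvent, Set.mem_ofPred_eq, Set.mem_univ, and_true]
      exact and_iff_left fun k hk hk0 => absurd hk (by omega)
    rw [h0, hM a b _ MeasurableSet.univ, measure_univ, mul_one, entryKernel]
  | succ n ih =>
    rw [entryEvent_succ]
    refine (measure_shift_mem ℙ hM (C := fun ζ => if ζ ∈ A then ∅ else entryEvent A n b)
      (fun ζ => by split_ifs <;> simp [measurableSet_entryEvent]) a).trans
      (tsum_congr fun ζ => ?_)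
    split_ifs <;> simp [ih]

theorem measure_exists_mem_eq_tsum_entryDist (A : Set E) (a : E) :
    ℙ a {ω | ∃ k, 0 < k ∧ ω k ∈ A} = ∑' b, if b ∈ A then entryDist P A a b else 0 := by
  have hunion : {ω : ℕ → E | ∃ k, 0 < k ∧ ω k ∈ A} = ⋃ p : ℕ × A, entryEvent A p.1 p.2 := by
    ext ω
    simp only [Set.mem_ofPred_eq, Set.mem_iUnion, Prod.exists, Subtype.exists]
    constructor
    · intro h
      obtain ⟨m, hA, hm⟩ := exists_mem_entryEvent h
      exact ⟨m, _, hA, hm⟩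
    · rintro ⟨n, b, hb, hω⟩
      exact ⟨n + 1, n.succ_pos, hω.1 ▸ hb⟩
  rw [hunion, measure_iUnion, ENNReal.tsum_prod', ENNReal.tsum_comm]
  · refine (tsum_subtype A fun b => ∑' n, ℙ a (entryEvent A n b)).trans (tsum_congr fun b => ?_)
    simp [Set.indicator_apply, entryDist, measure_entryEvent ℙ hM hprob]
  · rintro ⟨n, b⟩ ⟨m, c⟩ hne
    refine Set.disjoint_left.2 fun ω hb hc => hne ?_
    obtain ⟨rfl, hbc⟩ := eq_of_mem_entryEvent b.2 c.2 hb hc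
    rw [Subtype.ext hbc]
  · exact fun p => measurableSet_entryEvent _ _ _

theorem measure_retT_eq_retT_singleton {F : Set E} {ξ : E} (hξ : ξ ∈ F) {a : E}
    (hrec : ℙ a {ω | ∃ n, 0 < n ∧ ω n = ξ} = 1) :
    ℙ a {ω | retT F ω = retT {ξ} ω} = entryDist P F a ξ := by
  have hvisit : MeasurableSet {ω : ℕ → E | ∃ n, 0 < n ∧ ω n = ξ} := by measurability
  -- on paths that never visit `ξ` both return times may be `⊤`
  have hevent : {ω : ℕ → E | retT F ω = retT {ξ} ω} ∩ {ω | ∃ n, 0 < n ∧ ω n = ξ}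
      = ⋃ n, entryEvent F n ξ := by
    ext ω
    simp only [Set.mem_inter_iff, Set.mem_ofPred_eq, Set.mem_iUnion]
    constructor
    · rintro ⟨hret, hvis⟩
      obtain ⟨m, hm, hmem⟩ := exists_mem_entryEvent (A := {ξ}) (by simpa using hvis)
      rw [Set.mem_singleton_iff] at hm
      obtain ⟨hretξ, -⟩ := (mem_entryEvent_iff (Set.mem_singleton _)).1 (hm ▸ hmem)
      exact ⟨m, (mem_entryEvent_iff hξ).2 ⟨hret.trans hretξ, hm⟩⟩
    · rintro ⟨n, hn⟩
      have hnξ : ω ∈ entryEvent {ξ} n ξ :=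
        ⟨hn.1, fun k hk hkn hkξ => hn.2 k hk hkn (Set.mem_singleton_iff.1 hkξ ▸ hξ)⟩
      exact ⟨((mem_entryEvent_iff hξ).1 hn).1.trans
        ((mem_entryEvent_iff (Set.mem_singleton ξ)).1 hnξ).1.symm, n + 1, n.succ_pos, hn.1⟩
  have := hprob a
  rw [← measure_inter_conull ((prob_compl_eq_zero_iff hvisit).2 hrec), hevent, measure_iUnion]
  · exact tsum_congr fun n => measure_entryEvent ℙ hM hprob F n a ξ
  · exact fun n m hne => Set.disjoint_left.2 fun ω hn hm => hne (eq_of_mem_entryEvent hξ hξ hn hm).1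
  · exact fun n => measurableSet_entryEvent F n ξ

theorem entryDist_balance {ν : E → ℝ≥0∞} (hinv : ∀ b, ∑' a, ν a * P a b = ν b) {F : Set E}
    {ξ : E} (hξ : ξ ∈ F) (hνξ : ν ξ ≠ ⊤) (hrec : ℙ ξ {ω | ∃ n, 0 < n ∧ ω n = ξ} = 1) :
    (∑' η, if η ∈ F ∧ η ≠ ξ then ν η * entryDist P F η ξ else 0)
      = ν ξ * ∑' η, if η ∈ F ∧ η ≠ ξ then entryDist P F ξ η else 0 := by
  have := hprob ξ
  have hreturn : entryDist P {ξ} ξ ξ = 1 := by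
    simpa using (measure_exists_mem_eq_tsum_entryDist ℙ hM hprob {ξ} ξ).symm.trans hrec
  have hstoch : (∑' η, if η ∈ F then entryDist P F ξ η else 0) = 1 := by
    rw [← measure_exists_mem_eq_tsum_entryDist ℙ hM hprob]
    exact le_antisymm prob_le_one
      (hrec.symm.le.trans (measure_mono fun ω ⟨n, hn, he⟩ => ⟨n, hn, he ▸ hξ⟩))
  exact global_balance hξ hνξ (tsum_mul_entryDist hinv hξ hνξ hreturn) hstoch

end PathMeasure

theorem tsum_ite_toReal {p : E → Prop} [DecidablePred p] {f : E → ℝ≥0∞}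
    (hf : ∀ η, p η → f η ≠ ⊤) :
    ∑' η, (if p η then (f η).toReal else 0) = (∑' η, if p η then f η else 0).toReal := by
  rw [ENNReal.tsum_toReal_eq fun η => by split_ifs with h <;> simp [hf η, h]]
  exact tsum_congr fun η => by split_ifs <;> rfl

theorem balance_toReal {ν : E → ℝ≥0∞} {K : E → E → ℝ≥0∞} {w : E → ℝ} {r : E → E → ℝ}
    {F : Set E} {ξ : E} (hξ : ξ ∈ F) (hfin : ∀ η ∈ F, ∀ ζ ∈ F, ν η * K η ζ ≠ ⊤)
    (hwr : ∀ η ∈ F, ∀ ζ ∈ F, η ≠ ζ → w η * r η ζ = (ν η * K η ζ).toReal)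
    (hbal : (∑' η, if η ∈ F ∧ η ≠ ξ then ν η * K η ξ else 0)
      = ν ξ * ∑' η, if η ∈ F ∧ η ≠ ξ then K ξ η else 0) :
    ∑' η, (if η ∈ F ∧ η ≠ ξ then w η * r η ξ else 0)
      = w ξ * ∑' η, (if η ∈ F ∧ η ≠ ξ then r ξ η else 0) := by
  have hleft : ∑' η, (if η ∈ F ∧ η ≠ ξ then w η * r η ξ else 0)
      = (∑' η, if η ∈ F ∧ η ≠ ξ then ν η * K η ξ else 0).toReal := by
    rw [← tsum_ite_toReal fun η hc => hfin η hc.1 ξ hξ]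
    exact tsum_congr fun η => by split_ifs with hc; exacts [hwr η hc.1 ξ hξ hc.2, rfl]
  have hright : w ξ * ∑' η, (if η ∈ F ∧ η ≠ ξ then r ξ η else 0)
      = (∑' η, if η ∈ F ∧ η ≠ ξ then ν ξ * K ξ η else 0).toReal := by
    rw [← tsum_mul_left, ← tsum_ite_toReal fun η hc => hfin ξ hξ η hc.1]
    exact tsum_congr fun η => by
      split_ifs with hc; exacts [hwr ξ hξ η hc.1 (Ne.symm hc.2), mul_zero _]
  rw [hleft, hright, hbal, ← ENNReal.tsum_mul_left]
  simp only [mul_ite, mul_zero]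

theorem ofReal_mul_ofReal_div {x y z : ℝ} (hx : 0 ≤ x) (hy : 0 < y) :
    ENNReal.ofReal (x * y) * ENNReal.ofReal (z / y) = ENNReal.ofReal (x * z) := by
  rw [← ENNReal.ofReal_mul (mul_nonneg hx hy.le)]
  congr 1
  field_simp

theorem tsum_ofReal_mul_ofReal_div_eq {R : E → E → ℝ} {lam μ : E → ℝ}
    (hR_nonneg : ∀ η ξ, 0 ≤ R η ξ) (hRdiag : ∀ η, R η η = 0) (hlampos : ∀ η, 0 < lam η)
    (hμpos : ∀ η, 0 < μ η) (hinv : ∀ ξ, ∑' η, (if η = ξ then 0 else μ η * R η ξ) = μ ξ * lam ξ)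
    (b : E) :
    ∑' a, ENNReal.ofReal (μ a * lam a) * ENNReal.ofReal (R a b / lam a)
      = ENNReal.ofReal (μ b * lam b) := by
  have hb : ∑' a, μ a * R a b = μ b * lam b := by
    rw [← hinv b]
    exact tsum_congr fun a => by split_ifs with h <;> simp [h, hRdiag]
  -- a non-summable `tsum` would be the junk value `0`
  have hsum : Summable fun a => μ a * R a b := by
    by_contra hns
    rw [tsum_eq_zero_of_not_summable hns] at hb
    linarith [mul_pos (hμpos b) (hlampos b)]
  simp only [ofReal_mul_ofReal_div (hμpos _).le (hlampos _)]
  rw [← ENNReal.ofReal_tsum_of_nonneg (fun a => mul_nonneg (hμpos a).le (hR_nonneg a b)) hsum, hb]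

end TraceChain

open TraceChain

theorem stmt8_general {E : Type*} [Countable E] [MeasurableSpace E] [MeasurableSingletonClass E]
    (R : E → E → ℝ) (lam μ h : E → ℝ) (ℙ : E → Measure (ℕ → E))
    (F : Set E) (Rh : E → E → ℝ)
    (hsupp : F = {η | 0 < h η})
    (hRdiag : ∀ η, R η η = 0)
    (hR_nonneg : ∀ η ξ, 0 ≤ R η ξ)
    (hlampos : ∀ η, 0 < lam η)
    (hμpos : ∀ η, 0 < μ η)
    (hinv : ∀ ξ, ∑' η, (if η = ξ then 0 else μ η * R η ξ) = μ ξ * lam ξ)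
    (hprob : ∀ η, IsProbabilityMeasure (ℙ η))
    (hMarkov : ∀ (η ξ : E) (C : Set (ℕ → E)), MeasurableSet C →
      ℙ η {ω | ω 1 = ξ ∧ (fun n => ω (n + 1)) ∈ C}
        = ENNReal.ofReal (R η ξ / lam η) * ℙ ξ C)
    (hrec : ∀ η ξ, ℙ η {ω | ∃ n, 0 < n ∧ ω n = ξ} = 1)
    (hRh : ∀ η ξ, η ≠ ξ →
      Rh η ξ = (lam η / h η) * (ℙ η {ω | retT F ω = retT {ξ} ω}).toReal) :
    (∀ ξ ∈ F, ∑' η, (if η ∈ F ∧ η ≠ ξ then h η * μ η * Rh η ξ else 0)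
        = h ξ * μ ξ * ∑' η, (if η ∈ F ∧ η ≠ ξ then Rh ξ η else 0))
    ∧ ((∀ η ξ, μ η * R η ξ = μ ξ * R ξ η) →
        ∀ η ∈ F, ∀ ξ ∈ F, h η * μ η * Rh η ξ = h ξ * μ ξ * Rh ξ η) := by
  set P : E → E → ℝ≥0∞ := fun a b => ENNReal.ofReal (R a b / lam a)
  set ν : E → ℝ≥0∞ := fun a => ENNReal.ofReal (μ a * lam a)
  have hinvP : ∀ b, ∑' a, ν a * P a b = ν b :=
    tsum_ofReal_mul_ofReal_div_eq hR_nonneg hRdiag hlampos hμpos hinv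
  have hdist : ∀ ξ ∈ F, ∀ a, ℙ a {ω | retT F ω = retT {ξ} ω} = entryDist P F a ξ :=
    fun ξ hξ a => measure_retT_eq_retT_singleton ℙ hMarkov hprob hξ (hrec a ξ)
  have hfin : ∀ η ∈ F, ∀ ξ ∈ F, ν η * entryDist P F η ξ ≠ ⊤ := fun η _ ξ hξ =>
    ENNReal.mul_ne_top ENNReal.ofReal_ne_top (hdist ξ hξ η ▸ measure_ne_top _ _)
  have hweight : ∀ η ∈ F, ∀ ξ ∈ F, η ≠ ξ →
      h η * μ η * Rh η ξ = (ν η * entryDist P F η ξ).toReal := fun η hη ξ hξ hne => by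
    have hhη : h η ≠ 0 := by rw [hsupp] at hη; exact hη.ne'
    rw [hRh η ξ hne, hdist ξ hξ η, ENNReal.toReal_mul,
      ENNReal.toReal_ofReal (mul_pos (hμpos η) (hlampos η)).le]
    field_simp
  refine ⟨fun ξ hξ => balance_toReal (w := fun η => h η * μ η) hξ hfin hweight
    (entryDist_balance (P := P) ℙ hMarkov hprob hinvP hξ ENNReal.ofReal_ne_top (hrec ξ ξ)),
    fun hrev η hη ξ hξ => ?_⟩
  obtain rfl | hne := eq_or_ne η ξ
  · rfl
  rw [hweight η hη ξ hξ hne, hweight ξ hξ η hη hne.symm, mul_entryDist_comm fun a b => by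
    rw [ofReal_mul_ofReal_div (hμpos a).le (hlampos a),
      ofReal_mul_ofReal_div (hμpos b).le (hlampos b), hrev]]

/-- Let `{η_t}` be an irreducible recurrent continuous-time Markov chain on countable `E`,
with invariant measure `μ`, and let `h ≥ 0` have support `F`.  Then the measure
`μ_o^h(ξ) = h(ξ)μ(ξ)`, `ξ ∈ F`, is invariant for the `h`-trace process, whose rates are
`R^h(η,ξ) = (lam(η)/h(η)) P_η[T_F⁺ = T_ξ⁺]` (balance equations on `F`); moreover, if `μ` is
reversible for the original chain then `μ_o^h` is reversible for the trace process.
`ℙ` denotes the family of laws of the jump chain, with jump probabilities `R(η,ξ)/lam(η)`. -/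
theorem stmt8 {E : Type*} [Countable E] [MeasurableSpace E] [MeasurableSingletonClass E]
    (R : E → E → ℝ) (lam μ h : E → ℝ) (ℙ : E → Measure (ℕ → E))
    (F : Set E) (Rh : E → E → ℝ)
    (hh_nonneg : ∀ η, 0 ≤ h η)
    (hsupp : F = {η | 0 < h η}) (hFne : F.Nonempty)
    (hRdiag : ∀ η, R η η = 0)
    (hR_nonneg : ∀ η ξ, 0 ≤ R η ξ)
    (hRsum : ∀ η, Summable (R η))
    (hlam : ∀ η, lam η = ∑' ξ, R η ξ)
    (hlampos : ∀ η, 0 < lam η)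
    (hμpos : ∀ η, 0 < μ η)
    (hinv : ∀ ξ, ∑' η, (if η = ξ then 0 else μ η * R η ξ) = μ ξ * lam ξ)
    (hprob : ∀ η, IsProbabilityMeasure (ℙ η))
    (hstart : ∀ η, ℙ η {ω | ω 0 = η} = 1)
    (hMarkov : ∀ (η ξ : E) (C : Set (ℕ → E)), MeasurableSet C →
      ℙ η {ω | ω 1 = ξ ∧ (fun n => ω (n + 1)) ∈ C}
        = ENNReal.ofReal (R η ξ / lam η) * ℙ ξ C)
    (hrec : ∀ η ξ, ℙ η {ω | ∃ n, 0 < n ∧ ω n = ξ} = 1)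
    (hRh : ∀ η ξ, η ≠ ξ →
      Rh η ξ = (lam η / h η) * (ℙ η {ω | retT F ω = retT {ξ} ω}).toReal)
    (hRhdiag : ∀ η, Rh η η = 0) :
    (∀ ξ ∈ F, ∑' η, (if η ∈ F ∧ η ≠ ξ then h η * μ η * Rh η ξ else 0)
        = h ξ * μ ξ * ∑' η, (if η ∈ F ∧ η ≠ ξ then Rh ξ η else 0))
    ∧ ((∀ η ξ, μ η * R η ξ = μ ξ * R ξ η) →
        ∀ η ∈ F, ∀ ξ ∈ F, h η * μ η * Rh η ξ = h ξ * μ ξ * Rh ξ η) :=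
  stmt8_general R lam μ h ℙ F Rh hsupp hRdiag hR_nonneg hlampos hμpos hinv hprob hMarkov hrec hRh
end

section
/- Let F ⊆ E and let R^F denote the transition rates of the trace of an irreducible recurrent Markov chain {η_t} on F. Then for η, ξ ∈ F with η ≠ ξ: R^F(η,ξ) = R(η,ξ) + Σ_{ζ∈F^c} R(η,ζ) P_ζ[T_F = T_ξ], i.e., the trace rate equals the direct rate plus the rates of excursions through F^c that re-enter F at ξ. -/
/-!
First-step analysis. Condition on the first jump `ω 1 = ζ` of the jump chain started at `η`.
If `ζ = ξ`, both `F` and `ξ` are hit at time 1. If `ζ ∈ F`, `ζ ≠ ξ`, the chain enters `F`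
away from `ξ`, so the event fails. If `ζ ∉ F`, both hitting times are one plus those of the
shifted path, which by the Markov property is the chain started at `ζ`. Summing over `ζ` and
multiplying by `lam η` turns the jump probabilities `R η ζ / lam η` into rates.
-/

open MeasureTheory
open scoped ENNReal
open scoped Classical

instance : BorelSpace ℕ∞ := ⟨borel_eq_top_of_countable.symm⟩

section retT

variable {E : Type*} {A : Set E} {ω : ℕ → E}

lemma retT_eq_iInf_succ : retT A ω = ⨅ (n : ℕ) (_ : ω (n + 1) ∈ A), ((n + 1 : ℕ) : ℕ∞) := by
  rw [retT, ← inf_iInf_nat_succ]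
  simp

lemma one_le_retT : 1 ≤ retT A ω := by
  rw [retT_eq_iInf_succ]
  exact le_iInf₂ fun n _ => by exact_mod_cast Nat.le_add_left 1 n

lemma retT_of_mem (h : ω 1 ∈ A) : retT A ω = 1 :=
  le_antisymm (by rw [retT_eq_iInf_succ]; exact iInf₂_le_of_le 0 h (by simp)) one_le_retT

lemma retT_of_notMem (h : ω 1 ∉ A) : retT A ω = retT A (fun n => ω (n + 1)) + 1 := by
  rw [retT_eq_iInf_succ, retT_eq_iInf_succ, ENat.iInf₂_add, ← inf_iInf_nat_succ]
  simp [h]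

lemma retT_eq_one_iff : retT A ω = 1 ↔ ω 1 ∈ A := by
  refine ⟨fun h => ?_, retT_of_mem⟩
  by_contra hA
  have h2 : (1 : ℕ∞) + 1 ≤ retT A ω := by
    rw [retT_of_notMem hA]; gcongr; exact one_le_retT
  rw [h] at h2
  exact absurd h2 (by decide)

lemma measurable_retT [MeasurableSpace E] [MeasurableSingletonClass E] [Countable E] (A : Set E) :
    Measurable (retT A) := by
  have hA : MeasurableSet A := A.to_countable.measurableSet
  refine Measurable.iInf fun n => ?_
  simp_rw [iInf_eq_if]
  exact Measurable.ite ((MeasurableSet.const _).inter (measurable_pi_apply n hA))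
    measurable_const measurable_const

end retT

lemma retT_eq_retT_singleton_iff {E : Type*} {F : Set E} {ξ : E} {ω : ℕ → E} (hξ : ξ ∈ F) :
    retT F ω = retT {ξ} ω ↔
      ω 1 = ξ ∨ ω 1 ∉ F ∧ retT F (fun n => ω (n + 1)) = retT {ξ} (fun n => ω (n + 1)) := by
  by_cases h1ξ : ω 1 = ξ
  · simp [h1ξ, retT_of_mem, hξ]
  by_cases h1F : ω 1 ∈ F
  · simp only [retT_of_mem h1F, h1ξ, h1F, not_true, false_and, or_false, iff_false]
    exact fun h => h1ξ (retT_eq_one_iff.mp h.symm)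
  · rw [retT_of_notMem h1F, retT_of_notMem (A := {ξ}) h1ξ]
    simp [h1ξ, h1F]

lemma measure_eq_tsum_inter_preimage_singleton {α β : Type*} [MeasurableSpace α]
    [MeasurableSpace β] [Countable β] [MeasurableSingletonClass β] (μ : Measure α) {f : α → β}
    (hf : Measurable f) {s : Set α} (hs : MeasurableSet s) :
    μ s = ∑' b, μ (s ∩ f ⁻¹' {b}) := by
  rw [← measure_iUnion, ← Set.inter_iUnion, ← Set.preimage_iUnion, Set.iUnion_of_singleton,
    Set.preimage_univ, Set.inter_univ]
  · exact fun b b' hbb' =>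
      (Set.disjoint_singleton.mpr hbb').preimage f |>.inter_left' s |>.inter_right' s
  · exact fun b => hs.inter (hf (measurableSet_singleton b))

section FirstStep

variable {E : Type*} [MeasurableSpace E] [Countable E] [MeasurableSingletonClass E]
  {μ : Measure (ℕ → E)} {ℙ : E → Measure (ℕ → E)} {p : E → ℝ≥0∞}

lemma measure_eq_tsum_of_mem_iff
    (hMarkov : ∀ ζ C, MeasurableSet C →
      μ {ω | ω 1 = ζ ∧ (fun n => ω (n + 1)) ∈ C} = p ζ * ℙ ζ C)
    {s : Set (ℕ → E)} (hs : MeasurableSet s) {C : E → Set (ℕ → E)}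
    (hC : ∀ ζ, MeasurableSet (C ζ)) (hsC : ∀ ω, ω ∈ s ↔ (fun n => ω (n + 1)) ∈ C (ω 1)) :
    μ s = ∑' ζ, p ζ * ℙ ζ (C ζ) := by
  have hfiber : ∀ ζ,
      s ∩ (fun ω => ω 1) ⁻¹' {ζ} = {ω | ω 1 = ζ ∧ (fun n => ω (n + 1)) ∈ C ζ} := by
    intro ζ
    ext ω
    simp only [Set.mem_inter_iff, Set.mem_preimage, Set.mem_singleton_iff, Set.mem_ofPred_eq, hsC]
    constructor
    · rintro ⟨h, rfl⟩; exact ⟨rfl, h⟩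
    · rintro ⟨rfl, h⟩; exact ⟨h, rfl⟩
  rw [measure_eq_tsum_inter_preimage_singleton μ (measurable_pi_apply 1) hs]
  simp_rw [hfiber, hMarkov _ _ (hC _)]

lemma measure_retT_eq_retT_singleton
    (hMarkov : ∀ ζ C, MeasurableSet C →
      μ {ω | ω 1 = ζ ∧ (fun n => ω (n + 1)) ∈ C} = p ζ * ℙ ζ C)
    {F : Set E} {ξ : E} (hξ : ξ ∈ F) (hξ_univ : ℙ ξ Set.univ = 1) :
    μ {ω | retT F ω = retT {ξ} ω} =
      p ξ + ∑' ζ, if ζ ∉ F then p ζ * ℙ ζ {ω | retT F ω = retT {ξ} ω} else 0 := by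
  set A := {ω | retT F ω = retT {ξ} ω}
  have hA : MeasurableSet A := measurableSet_eq_fun (measurable_retT F) (measurable_retT {ξ})
  rw [measure_eq_tsum_of_mem_iff hMarkov hA
    (C := fun ζ => if ζ = ξ then Set.univ else if ζ ∈ F then ∅ else A)
    (fun ζ => by split_ifs <;> simp [hA])
    (fun ω => by
      rw [Set.mem_ofPred_eq, retT_eq_retT_singleton_iff hξ]; split_ifs <;> simp_all [A]),
    ENNReal.tsum_eq_add_tsum_ite ξ]
  congr 1
  · simp [hξ_univ]
  · exact tsum_congr fun ζ => by split_ifs <;> simp_all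

end FirstStep

/-- `ℙ` is the family of laws of the jump chain, with jump probabilities `R(η,ξ)/lam(η)`. -/
theorem stmt9_general {E : Type*} [Countable E] [MeasurableSpace E] [MeasurableSingletonClass E]
    (R : E → E → ℝ) (lam : E → ℝ) (ℙ : E → Measure (ℕ → E))
    (F : Set E) (η ξ : E)
    (hξF : ξ ∈ F)
    (hR_nonneg : ∀ η ξ, 0 ≤ R η ξ)
    (hlampos : ∀ η, 0 < lam η)
    (hprob : ∀ η, IsProbabilityMeasure (ℙ η))
    (hMarkov : ∀ (η ξ : E) (C : Set (ℕ → E)), MeasurableSet C →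
      ℙ η {ω | ω 1 = ξ ∧ (fun n => ω (n + 1)) ∈ C}
        = ENNReal.ofReal (R η ξ / lam η) * ℙ ξ C) :
    lam η * (ℙ η {ω | retT F ω = retT {ξ} ω}).toReal
      = R η ξ + ∑' ζ, (if ζ ∉ F
          then R η ζ * (ℙ ζ {ω | retT F ω = retT {ξ} ω}).toReal else 0) := by
  set A := {ω | retT F ω = retT {ξ} ω}
  have := hprob
  have hfirst := measure_retT_eq_retT_singleton (hMarkov η) hξF measure_univ
  have hterm_ne_top : ∀ ζ,
      (if ζ ∉ F then ENNReal.ofReal (R η ζ / lam η) * ℙ ζ A else 0) ≠ ⊤ := fun ζ => by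
    split_ifs <;> simp [ENNReal.mul_ne_top, measure_ne_top]
  have hsum_ne_top : ∑' ζ, (if ζ ∉ F then ENNReal.ofReal (R η ζ / lam η) * ℙ ζ A else 0) ≠ ⊤ :=
    fun h => measure_ne_top (ℙ η) A (by rw [hfirst, h, add_top])
  have hR_div_nonneg : ∀ ζ, 0 ≤ R η ζ / lam η :=
    fun ζ => div_nonneg (hR_nonneg η ζ) (hlampos η).le
  rw [hfirst, ENNReal.toReal_add ENNReal.ofReal_ne_top hsum_ne_top,
    ENNReal.tsum_toReal_eq hterm_ne_top, mul_add, ← tsum_mul_left]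
  congr 1
  · rw [ENNReal.toReal_ofReal (hR_div_nonneg ξ), mul_div_cancel₀ _ (hlampos η).ne']
  · refine tsum_congr fun ζ => ?_
    by_cases hζ : ζ ∈ F
    · simp [hζ]
    · rw [if_pos hζ, if_pos hζ, ENNReal.toReal_mul, ENNReal.toReal_ofReal (hR_div_nonneg ζ),
        ← mul_assoc, mul_div_cancel₀ _ (hlampos η).ne']

/-- For an irreducible recurrent Markov chain with rates `R`, the rates of the trace
process on `F`, `R^F(η,ξ) = lam(η) P_η[T_F⁺ = T_ξ⁺]`, satisfy
`R^F(η,ξ) = R(η,ξ) + ∑_{ζ ∈ F^c} R(η,ζ) P_ζ[T_F = T_ξ]`: the trace rate is the direct rate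
plus the rates of excursions through `F^c` re-entering `F` at `ξ`.
`ℙ` is the family of laws of the jump chain, with jump probabilities `R(η,ξ)/lam(η)`. -/
theorem stmt9 {E : Type*} [Countable E] [MeasurableSpace E] [MeasurableSingletonClass E]
    (R : E → E → ℝ) (lam : E → ℝ) (ℙ : E → Measure (ℕ → E))
    (F : Set E) (η ξ : E)
    (hηF : η ∈ F) (hξF : ξ ∈ F) (hηξ : η ≠ ξ)
    (hRdiag : ∀ η, R η η = 0)
    (hR_nonneg : ∀ η ξ, 0 ≤ R η ξ)
    (hRsum : ∀ η, Summable (R η))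
    (hlam : ∀ η, lam η = ∑' ζ, R η ζ)
    (hlampos : ∀ η, 0 < lam η)
    (hprob : ∀ η, IsProbabilityMeasure (ℙ η))
    (hstart : ∀ η, ℙ η {ω | ω 0 = η} = 1)
    (hMarkov : ∀ (η ξ : E) (C : Set (ℕ → E)), MeasurableSet C →
      ℙ η {ω | ω 1 = ξ ∧ (fun n => ω (n + 1)) ∈ C}
        = ENNReal.ofReal (R η ξ / lam η) * ℙ ξ C)
    (hrec : ∀ η ξ, ℙ η {ω | ∃ n, 0 < n ∧ ω n = ξ} = 1) :
    lam η * (ℙ η {ω | retT F ω = retT {ξ} ω}).toReal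
      = R η ξ + ∑' ζ, (if ζ ∉ F
          then R η ζ * (ℙ ζ {ω | retT F ω = retT {ξ} ω}).toReal else 0) :=
  stmt9_general R lam ℙ F η ξ hξF hR_nonneg hlampos hprob hMarkov
end
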